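/- arXiv:2404.02736 — 5 statements merged into one kernel-verified Lean document; each statement's English description precedes it below -/
import Mathlib

section
/- Let 𝒵 be a finite type, m : ℕ, and z : Fin (m+1) → 𝒵. For p ∈ {0,…,m} and i, j ∈ 𝒵 with j ≠ i define the integer N j i p := card{k : 1 ≤ k ≤ p, z (k−1) = j ∧ z k = i}, and define the diagonal terms by N i i p := − Σ_{j ≠ i} N i j p. Then for all p, q ∈ {0,…,m} and all i₁, i₂ ∈ 𝒵: (if z p = i₁ then 1 else 0)·(if z q = i₂ then 1 else 0) = (if z 0 = i₁ then 1 else 0)·(if z 0 = i₂ then 1 else 0) + (if z 0 = i₂ then 1 else 0)·Σ_{k ∈ 𝒵} N k i₁ p + (if z 0 = i₁ then 1 else 0)·Σ_{k ∈ 𝒵} N k i₂ q + Σ_{k₁ ∈ 𝒵} Σ_{k₂ ∈ 𝒵} (N k₁ i₁ p)·(N k₂ i₂ q), as an equality of integers. -/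
open Finset
open Fin.NatCast

/-- The signed transition counting process of a finitary jump path: for `j ≠ i`,
`jumpCount m z j i p` is the number of transitions from `j` to `i` up to time `p`,
and on the diagonal we use the convention `N i i = - ∑_{j ≠ i} N i j`. -/
def jumpCount {𝒵 : Type*} [Fintype 𝒵] [DecidableEq 𝒵]
    (m : ℕ) (z : Fin (m + 1) → 𝒵) (j i : 𝒵) (p : ℕ) : ℤ :=
  if j = i then
    - ∑ l ∈ Finset.univ.filter (fun l => l ≠ i),
        (((Finset.Icc 1 p).filter
            (fun k : ℕ => z ((k - 1 : ℕ) : Fin (m + 1)) = i ∧ z ((k : ℕ) : Fin (m + 1)) = l)).card : ℤ)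
  else
    (((Finset.Icc 1 p).filter
        (fun k : ℕ => z ((k - 1 : ℕ) : Fin (m + 1)) = j ∧ z ((k : ℕ) : Fin (m + 1)) = i)).card : ℤ)

/-! A single transition `a → b` contributes `[b = i] - [a = i]` to `∑ j, N j i`: it counts once as
an inflow into `i` if `b = i ≠ a`, and once, through the diagonal convention, as an outflow from `i`
if `a = i ≠ b`. Hence `∑ j, N j i p` telescopes to `[z p = i] - [z 0 = i]`, and the bivariate
identity is the product of two such univariate identities. -/

theorem Finset.sum_Icc_one_sub_pred {M : Type*} [AddCommGroup M] (f : ℕ → M) (p : ℕ) :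
    ∑ t ∈ Icc 1 p, (f t - f (t - 1)) = f p - f 0 := by
  induction p with
  | zero => simp
  | succ p ih =>
    rw [sum_Icc_succ_top (by omega), ih, Nat.add_sub_cancel]
    abel

section

variable {𝒵 : Type*} [Fintype 𝒵] [DecidableEq 𝒵]

/-- The signed counts `jumpCount` of the one-step path `a → b`. -/
def stepJump (a b j i : 𝒵) : ℤ :=
  if j = i then - ∑ l ∈ univ.filter (· ≠ i), if a = i ∧ b = l then 1 else 0
  else if a = j ∧ b = i then 1 else 0

theorem sum_stepJump (a b i : 𝒵) :
    ∑ j, stepJump a b j i = (if b = i then 1 else 0) - (if a = i then 1 else 0) := by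
  have off_diagonal : ∀ j ∈ ({i}ᶜ : Finset 𝒵),
      stepJump a b j i = if a = j ∧ b = i then 1 else 0 := by
    intro j hj
    simp_all [stepJump]
  rw [Fintype.sum_eq_add_sum_compl i, sum_congr rfl off_diagonal]
  by_cases ha : a = i <;> by_cases hb : b = i <;> simp [stepJump, ha, hb, sum_ite_eq, eq_comm]

theorem jumpCount_eq_sum_stepJump (m : ℕ) (z : Fin (m + 1) → 𝒵) (j i : 𝒵) (p : ℕ) :
    jumpCount m z j i p =
      ∑ t ∈ Icc 1 p, stepJump (z ((t - 1 : ℕ) : Fin (m + 1))) (z (t : Fin (m + 1))) j i := by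
  unfold jumpCount stepJump
  split_ifs
  · simp only [natCast_card_filter, sum_neg_distrib]
    rw [sum_comm]
  · simp only [natCast_card_filter]

theorem univariate_indicator_counting (m : ℕ) (z : Fin (m + 1) → 𝒵) (i : 𝒵) (p : ℕ) :
    (if z (p : Fin (m + 1)) = i then (1 : ℤ) else 0)
      = (if z 0 = i then (1 : ℤ) else 0) + ∑ k : 𝒵, jumpCount m z k i p := by
  simp_rw [jumpCount_eq_sum_stepJump]
  rw [sum_comm]
  simp_rw [sum_stepJump]
  rw [sum_Icc_one_sub_pred (fun t => if z (t : Fin (m + 1)) = i then (1 : ℤ) else 0)]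
  simp

end

theorem bivariate_indicator_counting_general {𝒵 : Type*} [Fintype 𝒵] [DecidableEq 𝒵]
    (m : ℕ) (z : Fin (m + 1) → 𝒵) (p q : ℕ) (i₁ i₂ : 𝒵) :
    (if z ((p : ℕ) : Fin (m + 1)) = i₁ then (1 : ℤ) else 0)
        * (if z ((q : ℕ) : Fin (m + 1)) = i₂ then (1 : ℤ) else 0)
      = (if z 0 = i₁ then (1 : ℤ) else 0) * (if z 0 = i₂ then (1 : ℤ) else 0)
        + (if z 0 = i₂ then (1 : ℤ) else 0) * ∑ k : 𝒵, jumpCount m z k i₁ p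
        + (if z 0 = i₁ then (1 : ℤ) else 0) * ∑ k : 𝒵, jumpCount m z k i₂ q
        + ∑ k₁ : 𝒵, ∑ k₂ : 𝒵, jumpCount m z k₁ i₁ p * jumpCount m z k₂ i₂ q := by
  rw [univariate_indicator_counting m z i₁ p, univariate_indicator_counting m z i₂ q,
    ← sum_mul_sum]
  ring

/-- The bivariate indicator–counting identity: the product of two state indicators decomposes
into initial indicators, single sums of signed transition counts, and a double sum of products
of transition counts. -/
theorem bivariate_indicator_counting {𝒵 : Type*} [Fintype 𝒵] [DecidableEq 𝒵]
    (m : ℕ) (z : Fin (m + 1) → 𝒵) (p q : ℕ) (hp : p ≤ m) (hq : q ≤ m) (i₁ i₂ : 𝒵) :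
    (if z ((p : ℕ) : Fin (m + 1)) = i₁ then (1 : ℤ) else 0)
        * (if z ((q : ℕ) : Fin (m + 1)) = i₂ then (1 : ℤ) else 0)
      = (if z 0 = i₁ then (1 : ℤ) else 0) * (if z 0 = i₂ then (1 : ℤ) else 0)
        + (if z 0 = i₂ then (1 : ℤ) else 0) * ∑ k : 𝒵, jumpCount m z k i₁ p
        + (if z 0 = i₁ then (1 : ℤ) else 0) * ∑ k : 𝒵, jumpCount m z k i₂ q
        + ∑ k₁ : 𝒵, ∑ k₂ : 𝒵, jumpCount m z k₁ i₁ p * jumpCount m z k₂ i₂ q :=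
  bivariate_indicator_counting_general m z p q i₁ i₂
end

section
/- Let (Ω, 𝒜, μ) be a probability space, let a₁ ≤ b₁ and a₂ ≤ b₂ be real numbers, and let X : ℕ → Ω → (ℝ × ℝ → ℝ) be a sequence of random fields that are independent and identically distributed (as random elements of ℝ×ℝ → ℝ with the product σ-algebra, each coordinate evaluation ω ↦ X n ω t being measurable). Assume that for every n and every ω, the path t ↦ X n ω t is nonnegative, monotone with respect to the componentwise partial order on ℝ², and has nonnegative rectangle increments; and assume ω ↦ X 0 ω (b₁,b₂) is μ-integrable. Define F(t) := ∫ X 0 ω t dμ(ω). Then for μ-almost every ω, sup_{t ∈ [a₁,b₁]×[a₂,b₂]} | (1/n) Σ_{m=0}^{n−1} X m ω t − F(t) | → 0 as n → ∞. -/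
/-!
Nonnegative rectangle increments give, for `w ≤ z ≤ (b₁, b₂)`,
`F z - F w ≤ (F (z₁, b₂) - F (w₁, b₂)) + (F (b₁, z₂) - F (b₁, w₂))`, so the oscillation of `F`
on a product of cells is controlled by the oscillations of its two monotone marginals. Cutting
each side of the rectangle into finitely many cells on which the marginal oscillates by at most
`ε / 2` therefore yields finitely many brackets `ℓ ≤ (p ↦ p t) ≤ u` with means `ε`-close, and the
strong law of large numbers for these finitely many brackets gives uniform convergence. Since
`F` may jump, the cells are half-open intervals and points, and the brackets are limits of the
path along monotone sequences inside a cell, whose means are computed by monotone convergence.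
-/

open Filter Topology MeasureTheory ProbabilityTheory Set

theorem Monotone.exists_one_sided_oscillations_le {f : ℝ → ℝ} (hf : Monotone f) (x : ℝ)
    {ε : ℝ} (hε : 0 < ε) :
    ∃ y < x, ∃ z > x, (∀ w < x, f w ≤ f y + ε) ∧ ∀ w > x, f z ≤ f w + ε := by
  have hl : ∀ᶠ w in 𝓝[<] x, Function.leftLim f x - ε < f w :=
    (hf.tendsto_leftLim x).eventually (lt_mem_nhds (sub_lt_self _ hε))
  have hr : ∀ᶠ w in 𝓝[>] x, f w < Function.rightLim f x + ε :=
    (hf.tendsto_rightLim x).eventually (gt_mem_nhds (lt_add_of_pos_right _ hε))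
  obtain ⟨y, hy, hyx⟩ := (hl.and self_mem_nhdsWithin).exists
  obtain ⟨z, hz, hxz⟩ := (hr.and self_mem_nhdsWithin).exists
  exact ⟨y, hyx, z, hxz, fun w hw => by linarith [hf.le_leftLim hw],
    fun w hw => by linarith [hf.rightLim_le hw]⟩

theorem Monotone.exists_finite_brackets {f : ℝ → ℝ} (hf : Monotone f) {s : Set ℝ}
    (hs : IsCompact s) {ε : ℝ} (hε : 0 < ε) :
    ∃ C : Set ((ℕ → ℝ) × (ℕ → ℝ)), C.Finite ∧
      (∀ c ∈ C, Antitone c.1 ∧ Monotone c.2 ∧ ∀ r, f (c.2 r) ≤ f (c.1 r) + ε) ∧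
      ∀ x ∈ s, ∃ c ∈ C, ∀ᶠ r in atTop, c.1 r ≤ x ∧ x ≤ c.2 r := by
  choose y hyx z hxz hy hz using fun x => hf.exists_one_sided_oscillations_le x hε
  obtain ⟨I, hI⟩ := hs.elim_finite_subcover (fun x => Ioo (y x) (z x)) (fun _ => isOpen_Ioo)
    fun x _ => mem_iUnion.2 ⟨x, hyx x, hxz x⟩
  let δ : ℕ → ℝ := fun r => 1 / ((r : ℝ) + 1)
  have hδ_pos : ∀ r, 0 < δ r := fun r => Nat.one_div_pos_of_nat
  have hδ_anti : Antitone δ := fun _ _ h => Nat.one_div_le_one_div h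
  have hδ_lt : ∀ η > 0, ∀ᶠ r in atTop, δ r < η := fun η hη =>
    tendsto_one_div_add_atTop_nhds_zero_nat.eventually (gt_mem_nhds hη)
  -- A pair `(lo, up)` stands for the cell `{w | ∀ᶠ r, lo r ≤ w ≤ up r}`; around the centre `x`
  -- these are `[y x, x)`, `{x}` and `(x, z x]`.
  let cells : ℝ → Set ((ℕ → ℝ) × (ℕ → ℝ)) := fun x =>
    {(fun _ => y x, fun r => x - δ r), (fun _ => x, fun _ => x), (fun r => x + δ r, fun _ => z x)}
  refine ⟨⋃ x ∈ I, cells x, I.finite_toSet.biUnion fun _ _ => toFinite _, ?_, ?_⟩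
  · simp only [mem_iUnion]
    rintro c ⟨x, -, hc | hc | hc⟩ <;> subst hc
    · exact ⟨antitone_const, fun _ _ h => sub_le_sub_left (hδ_anti h) x,
        fun r => hy x _ (sub_lt_self x (hδ_pos r))⟩
    · exact ⟨antitone_const, monotone_const, fun _ => le_add_of_nonneg_right hε.le⟩
    · exact ⟨fun _ _ h => add_le_add_right (hδ_anti h) x, monotone_const,
        fun r => hz x _ (lt_add_of_pos_right x (hδ_pos r))⟩
  · intro w hw
    obtain ⟨x, hx, hyw, hwz⟩ := mem_iUnion₂.1 (hI hw)
    rcases lt_trichotomy w x with h | rfl | h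
    · refine ⟨_, mem_biUnion hx (Or.inl rfl), (hδ_lt _ (sub_pos.2 h)).mono fun r hr => ?_⟩
      exact ⟨hyw.le, by simp only; linarith⟩
    · exact ⟨_, mem_biUnion hx (Or.inr (Or.inl rfl)), .of_forall fun _ => ⟨le_rfl, le_rfl⟩⟩
    · refine ⟨_, mem_biUnion hx (Or.inr (Or.inr rfl)), (hδ_lt _ (sub_pos.2 h)).mono fun r hr => ?_⟩
      exact ⟨by simp only; linarith, hwz.le⟩

theorem MonotoneOn.exists_finite_brackets_Icc {f : ℝ → ℝ} {a b : ℝ} (hf : MonotoneOn f (Icc a b))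
    {ε : ℝ} (hε : 0 < ε) :
    ∃ C : Set ((ℕ → ℝ) × (ℕ → ℝ)), C.Finite ∧
      (∀ c ∈ C, Antitone c.1 ∧ Monotone c.2 ∧ (∀ r, c.1 r ∈ Icc a b ∧ c.2 r ∈ Icc a b) ∧
        ∀ r, f (c.2 r) ≤ f (c.1 r) + ε) ∧
      ∀ x ∈ Icc a b, ∃ c ∈ C, ∀ᶠ r in atTop, c.1 r ≤ x ∧ x ≤ c.2 r := by
  rcases lt_or_ge b a with hba | hab
  · exact ⟨∅, finite_empty, by simp, fun x hx => absurd (hx.1.trans hx.2) (not_le.2 hba)⟩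
  -- brackets of the monotone extension `f ∘ projIcc`, pushed into `[a, b]`
  let π : ℝ → ℝ := fun x => projIcc a b hab x
  have hπ : Monotone π := fun _ _ h => Subtype.mono_coe _ (monotone_projIcc hab h)
  have hfπ : Monotone (f ∘ π) := fun _ _ h => hf (projIcc a b hab _).2 (projIcc a b hab _).2 (hπ h)
  obtain ⟨C, hC, hcell, hcov⟩ := hfπ.exists_finite_brackets isCompact_Icc hε
  refine ⟨(fun c => (π ∘ c.1, π ∘ c.2)) '' C, hC.image _, ?_, ?_⟩
  · rintro _ ⟨c, hc, rfl⟩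
    obtain ⟨hlo, hup, hosc⟩ := hcell c hc
    exact ⟨hπ.comp_antitone hlo, hπ.comp hup,
      fun r => ⟨(projIcc a b hab _).2, (projIcc a b hab _).2⟩, hosc⟩
  · intro x hx
    obtain ⟨c, hc, hev⟩ := hcov x hx
    refine ⟨_, mem_image_of_mem _ hc, hev.mono fun r hr => ?_⟩
    have hπx : π x = x := congrArg Subtype.val (projIcc_of_mem hab hx)
    exact ⟨hπx ▸ hπ hr.1, hπx ▸ hπ hr.2⟩

section Bracketing

variable {Ω E T : Type*} [MeasurableSpace Ω] [MeasurableSpace E] {μ : Measure Ω}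

/-- The class `{f t}` has finite `L¹`-bracketing numbers under the law of `Z`, the brackets
being required only on a set `S` carrying `Z`. -/
def FiniteBracketing (μ : Measure Ω) (Z : Ω → E) (S : Set E) (f : T → E → ℝ) : Prop :=
  ∀ ε > 0, ∃ B : Set (E → ℝ), B.Finite ∧
    (∀ g ∈ B, Measurable g ∧ Integrable (fun ω => g (Z ω)) μ) ∧
    ∀ t, ∃ ℓ ∈ B, ∃ u ∈ B, (∀ y ∈ S, ℓ y ≤ f t y ∧ f t y ≤ u y) ∧
      ∫ ω, u (Z ω) ∂μ - ∫ ω, ℓ (Z ω) ∂μ ≤ ε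

theorem ae_tendsto_empirical_mean [IsProbabilityMeasure μ] {Y : ℕ → Ω → E}
    (hindep : iIndepFun Y μ) (hident : ∀ n, IdentDistrib (Y n) (Y 0) μ μ) {g : E → ℝ}
    (hg : Measurable g) (hint : Integrable (fun ω => g (Y 0 ω)) μ) :
    ∀ᵐ ω ∂μ, Tendsto (fun n : ℕ => (n : ℝ)⁻¹ * ∑ m ∈ Finset.range n, g (Y m ω)) atTop
      (𝓝 (∫ ω, g (Y 0 ω) ∂μ)) := by
  filter_upwards [strong_law_ae_real (fun n ω => g (Y n ω)) hint
    (fun i j hij => (hindep.indepFun hij).comp hg hg) fun n => (hident n).comp hg] with ω hω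
  simpa only [div_eq_inv_mul] using hω

theorem FiniteBracketing.ae_tendsto_iSup_abs_sub [IsProbabilityMeasure μ] {Y : ℕ → Ω → E}
    {S : Set E} {f : T → E → ℝ} (hbr : FiniteBracketing μ (Y 0) S f) (hindep : iIndepFun Y μ)
    (hident : ∀ n, IdentDistrib (Y n) (Y 0) μ μ) (hS : ∀ n ω, Y n ω ∈ S)
    (hf : ∀ t, Measurable (f t)) :
    ∀ᵐ ω ∂μ, Tendsto (fun n : ℕ => ⨆ t, |(n : ℝ)⁻¹ * ∑ m ∈ Finset.range n, f t (Y m ω) -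
      ∫ ω', f t (Y 0 ω') ∂μ|) atTop (𝓝 0) := by
  choose B hB_fin hB hcover using fun k : ℕ => hbr (1 / ((k : ℝ) + 1)) Nat.one_div_pos_of_nat
  have hslln : ∀ᵐ ω ∂μ, ∀ k, ∀ g ∈ B k, Tendsto (fun n : ℕ => (n : ℝ)⁻¹ *
      ∑ m ∈ Finset.range n, g (Y m ω)) atTop (𝓝 (∫ ω', g (Y 0 ω') ∂μ)) :=
    ae_all_iff.2 fun k => (ae_ball_iff (hB_fin k).countable).2 fun g hg =>
      ae_tendsto_empirical_mean hindep hident (hB k g hg).1 (hB k g hg).2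
  filter_upwards [hslln] with ω hω
  refine tendsto_order.2 ⟨fun a ha => .of_forall fun n =>
    ha.trans_le (Real.iSup_nonneg fun _ => abs_nonneg _), fun ε hε => ?_⟩
  obtain ⟨k, hk⟩ := exists_nat_one_div_lt (half_pos hε)
  have hclose : ∀ᶠ n : ℕ in atTop, ∀ g ∈ B k, |(n : ℝ)⁻¹ * ∑ m ∈ Finset.range n, g (Y m ω) -
      ∫ ω', g (Y 0 ω') ∂μ| < ε / 4 := (eventually_all_finite (hB_fin k)).2 fun g hg => by
    simpa only [← Real.dist_eq] using Metric.tendsto_nhds.1 (hω k g hg) _ (by positivity)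
  filter_upwards [hclose] with n hn
  refine (Real.iSup_le (fun t => ?_) (by positivity : (0 : ℝ) ≤ 3 * ε / 4)).trans_lt (by linarith)
  obtain ⟨ℓ, hℓ, u, hu, hsq, hgap⟩ := hcover k t
  have hmean : ∫ ω', ℓ (Y 0 ω') ∂μ ≤ ∫ ω', f t (Y 0 ω') ∂μ ∧
      ∫ ω', f t (Y 0 ω') ∂μ ≤ ∫ ω', u (Y 0 ω') ∂μ := by
    have hint := integrable_of_le_of_le
      ((hf t).comp_aemeasurable (hident 0).aemeasurable_fst).aestronglyMeasurable
      (.of_forall fun ω' => (hsq _ (hS 0 ω')).1) (.of_forall fun ω' => (hsq _ (hS 0 ω')).2)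
      (hB k ℓ hℓ).2 (hB k u hu).2
    exact ⟨integral_mono (hB k ℓ hℓ).2 hint fun ω' => (hsq _ (hS 0 ω')).1,
      integral_mono hint (hB k u hu).2 fun ω' => (hsq _ (hS 0 ω')).2⟩
  have hemp : (n : ℝ)⁻¹ * ∑ m ∈ Finset.range n, ℓ (Y m ω) ≤
        (n : ℝ)⁻¹ * ∑ m ∈ Finset.range n, f t (Y m ω) ∧
      (n : ℝ)⁻¹ * ∑ m ∈ Finset.range n, f t (Y m ω) ≤
        (n : ℝ)⁻¹ * ∑ m ∈ Finset.range n, u (Y m ω) :=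
    ⟨by gcongr with m; exact (hsq _ (hS m ω)).1, by gcongr with m; exact (hsq _ (hS m ω)).2⟩
  have hℓn := abs_lt.1 (hn ℓ hℓ)
  have hun := abs_lt.1 (hn u hu)
  rw [abs_le]
  constructor <;> linarith [hmean.1, hmean.2, hemp.1, hemp.2]

end Bracketing

section Integrals

variable {Ω : Type*} [MeasurableSpace Ω] {μ : Measure Ω}

theorem integrable_iSup_of_le {g : ℕ → Ω → ℝ} {h : Ω → ℝ} (hg : ∀ r, Integrable (g r) μ)
    (hh : Integrable h μ) (hle : ∀ r ω, g r ω ≤ h ω) : Integrable (fun ω => ⨆ r, g r ω) μ :=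
  integrable_of_le_of_le
    (AEMeasurable.iSup fun r => (hg r).aemeasurable).aestronglyMeasurable
    (.of_forall fun ω => le_ciSup ⟨h ω, forall_mem_range.2 fun r => hle r ω⟩ 0)
    (.of_forall fun ω => ciSup_le fun r => hle r ω) (hg 0) hh

theorem integrable_iInf_of_le {g : ℕ → Ω → ℝ} {h : Ω → ℝ} (hg : ∀ r, Integrable (g r) μ)
    (hh : Integrable h μ) (hle : ∀ r ω, h ω ≤ g r ω) : Integrable (fun ω => ⨅ r, g r ω) μ :=
  integrable_of_le_of_le
    (AEMeasurable.iInf fun r => (hg r).aemeasurable).aestronglyMeasurable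
    (.of_forall fun ω => le_ciInf fun r => hle r ω)
    (.of_forall fun ω => ciInf_le ⟨h ω, forall_mem_range.2 fun r => hle r ω⟩ 0) hh (hg 0)

end Integrals

theorem Monotone.ciInf_le_le_ciSup {α : Type*} [Preorder α] {p : α → ℝ} (hp : Monotone p)
    {lo up : ℕ → α} {a b t : α} (hlo : ∀ r, a ≤ lo r) (hup : ∀ r, up r ≤ b)
    (ht : ∀ᶠ r in atTop, lo r ≤ t ∧ t ≤ up r) : ⨅ r, p (lo r) ≤ p t ∧ p t ≤ ⨆ r, p (up r) := by
  obtain ⟨r, hlo_t, ht_up⟩ := ht.exists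
  exact ⟨ciInf_le_of_le ⟨p a, forall_mem_range.2 fun r => hp (hlo r)⟩ r (hp hlo_t),
    le_ciSup_of_le ⟨p b, forall_mem_range.2 fun r => hp (hup r)⟩ r (hp ht_up)⟩

theorem sub_le_marginal_increments {G : ℝ × ℝ → ℝ} {b₁ b₂ : ℝ}
    (hG : ∀ x₁ y₁ x₂ y₂ : ℝ, x₁ ≤ y₁ → x₂ ≤ y₂ → y₁ ≤ b₁ → y₂ ≤ b₂ →
      0 ≤ G (y₁, y₂) - G (x₁, y₂) - G (y₁, x₂) + G (x₁, x₂))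
    {w z : ℝ × ℝ} (hwz : w ≤ z) (hz : z ≤ (b₁, b₂)) :
    G z - G w ≤ (G (z.1, b₂) - G (w.1, b₂)) + (G (b₁, z.2) - G (b₁, w.2)) := by
  obtain ⟨w₁, w₂⟩ := w
  obtain ⟨z₁, z₂⟩ := z
  obtain ⟨hwz₁, hwz₂⟩ := hwz
  obtain ⟨hz₁, hz₂⟩ := hz
  have := hG w₁ z₁ z₂ b₂ hwz₁ hz₂ hz₁ le_rfl
  have := hG w₁ b₁ w₂ z₂ (hwz₁.trans hz₁) hwz₂ le_rfl hz₂
  dsimp only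
  linarith

section MonotoneField

variable {Ω : Type*} [MeasurableSpace Ω] {μ : Measure Ω} {Z : Ω → ℝ × ℝ → ℝ}

theorem integrable_apply_of_le (hZ : AEMeasurable Z μ) (h0 : ∀ ω t, 0 ≤ Z ω t)
    (hmono : ∀ ω, Monotone (Z ω)) {b : ℝ × ℝ} (hb : Integrable (fun ω => Z ω b) μ) {t : ℝ × ℝ}
    (ht : t ≤ b) : Integrable (fun ω => Z ω t) μ :=
  integrable_of_le_of_le ((measurable_pi_apply t).comp_aemeasurable hZ).aestronglyMeasurable
    (.of_forall fun ω => h0 ω t) (.of_forall fun ω => hmono ω ht) (integrable_zero _ _ μ) hb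

theorem monotoneOn_integral_apply (hmono : ∀ ω, Monotone (Z ω)) {b : ℝ × ℝ}
    (hint : ∀ t ≤ b, Integrable (fun ω => Z ω t) μ) :
    MonotoneOn (fun t => ∫ ω, Z ω t ∂μ) (Iic b) := fun _ hs _ ht hst =>
  integral_mono (hint _ hs) (hint _ ht) fun ω => hmono ω hst

theorem integral_apply_rect_nonneg {b₁ b₂ : ℝ}
    (hrect : ∀ ω, ∀ x₁ y₁ x₂ y₂ : ℝ, x₁ ≤ y₁ → x₂ ≤ y₂ →
      0 ≤ Z ω (y₁, y₂) - Z ω (x₁, y₂) - Z ω (y₁, x₂) + Z ω (x₁, x₂))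
    (hint : ∀ t ≤ (b₁, b₂), Integrable (fun ω => Z ω t) μ) (x₁ y₁ x₂ y₂ : ℝ) (hx : x₁ ≤ y₁)
    (hy : x₂ ≤ y₂) (hy₁ : y₁ ≤ b₁) (hy₂ : y₂ ≤ b₂) :
    0 ≤ ∫ ω, Z ω (y₁, y₂) ∂μ - ∫ ω, Z ω (x₁, y₂) ∂μ - ∫ ω, Z ω (y₁, x₂) ∂μ +
      ∫ ω, Z ω (x₁, x₂) ∂μ := by
  have h₁ := hint (y₁, y₂) ⟨hy₁, hy₂⟩
  have h₂ := hint (x₁, y₂) ⟨hx.trans hy₁, hy₂⟩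
  have h₃ := hint (y₁, x₂) ⟨hy₁, hy.trans hy₂⟩
  have h₄ := hint (x₁, x₂) ⟨hx.trans hy₁, hy.trans hy₂⟩
  have h₁₂ : Integrable (fun ω => Z ω (y₁, y₂) - Z ω (x₁, y₂)) μ := h₁.sub h₂
  have h₁₂₃ : Integrable (fun ω => Z ω (y₁, y₂) - Z ω (x₁, y₂) - Z ω (y₁, x₂)) μ := h₁₂.sub h₃
  rw [← integral_sub h₁ h₂, ← integral_sub h₁₂ h₃, ← integral_add h₁₂₃ h₄]
  exact integral_nonneg fun ω => hrect ω x₁ y₁ x₂ y₂ hx hy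

theorem integral_iSup_sub_integral_iInf_le (hmono : ∀ ω, Monotone (Z ω)) {a b : ℝ × ℝ}
    (hint : ∀ t ≤ b, Integrable (fun ω => Z ω t) μ) {lo up : ℕ → ℝ × ℝ} (hlo : Antitone lo)
    (hup : Monotone up) (hlo_mem : ∀ r, lo r ∈ Icc a b) (hup_mem : ∀ r, up r ∈ Icc a b) {δ : ℝ}
    (hδ : ∀ᶠ r in atTop, ∫ ω, Z ω (up r) ∂μ - ∫ ω, Z ω (lo r) ∂μ ≤ δ) :
    ∫ ω, ⨆ r, Z ω (up r) ∂μ - ∫ ω, ⨅ r, Z ω (lo r) ∂μ ≤ δ := by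
  have hbdd_up : ∀ ω, BddAbove (range fun r => Z ω (up r)) := fun ω =>
    ⟨Z ω b, forall_mem_range.2 fun r => hmono ω (hup_mem r).2⟩
  have hbdd_lo : ∀ ω, BddBelow (range fun r => Z ω (lo r)) := fun ω =>
    ⟨Z ω a, forall_mem_range.2 fun r => hmono ω (hlo_mem r).1⟩
  have hlim_up := integral_tendsto_of_tendsto_of_monotone (fun r => hint _ (hup_mem r).2)
    (integrable_iSup_of_le (fun r => hint _ (hup_mem r).2) (hint b le_rfl)
      fun r ω => hmono ω (hup_mem r).2)
    (.of_forall fun ω => (hmono ω).comp hup)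
    (.of_forall fun ω => tendsto_atTop_ciSup ((hmono ω).comp hup) (hbdd_up ω))
  have hlim_lo := integral_tendsto_of_tendsto_of_antitone (fun r => hint _ (hlo_mem r).2)
    (integrable_iInf_of_le (fun r => hint _ (hlo_mem r).2)
      (hint a ((hlo_mem 0).1.trans (hlo_mem 0).2)) fun r ω => hmono ω (hlo_mem r).1)
    (.of_forall fun ω => (hmono ω).comp_antitone hlo)
    (.of_forall fun ω => tendsto_atTop_ciInf ((hmono ω).comp_antitone hlo) (hbdd_lo ω))
  exact le_of_tendsto (hlim_up.sub hlim_lo) hδ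

theorem integral_iSup_sub_integral_iInf_le_add (hmono : ∀ ω, Monotone (Z ω))
    (hrect : ∀ ω, ∀ x₁ y₁ x₂ y₂ : ℝ, x₁ ≤ y₁ → x₂ ≤ y₂ →
      0 ≤ Z ω (y₁, y₂) - Z ω (x₁, y₂) - Z ω (y₁, x₂) + Z ω (x₁, x₂))
    {a : ℝ × ℝ} {b₁ b₂ : ℝ} (hint : ∀ t ≤ (b₁, b₂), Integrable (fun ω => Z ω t) μ)
    {lo up : ℕ → ℝ × ℝ} (hlo : Antitone lo) (hup : Monotone up)
    (hlo_mem : ∀ r, lo r ∈ Icc a (b₁, b₂)) (hup_mem : ∀ r, up r ∈ Icc a (b₁, b₂))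
    (hlo_up : ∀ᶠ r in atTop, lo r ≤ up r) {ε₁ ε₂ : ℝ}
    (h₁ : ∀ r, ∫ ω, Z ω ((up r).1, b₂) ∂μ ≤ ∫ ω, Z ω ((lo r).1, b₂) ∂μ + ε₁)
    (h₂ : ∀ r, ∫ ω, Z ω (b₁, (up r).2) ∂μ ≤ ∫ ω, Z ω (b₁, (lo r).2) ∂μ + ε₂) :
    ∫ ω, ⨆ r, Z ω (up r) ∂μ - ∫ ω, ⨅ r, Z ω (lo r) ∂μ ≤ ε₁ + ε₂ :=
  integral_iSup_sub_integral_iInf_le hmono hint hlo hup hlo_mem hup_mem <|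
    hlo_up.mono fun r hr => by
      have := sub_le_marginal_increments (G := fun t => ∫ ω, Z ω t ∂μ)
        (integral_apply_rect_nonneg hrect hint) hr (hup_mem r).2
      linarith [h₁ r, h₂ r]

theorem finiteBracketing_eval_of_monotone_field (hZ : AEMeasurable Z μ) (h0 : ∀ ω t, 0 ≤ Z ω t)
    (hmono : ∀ ω, Monotone (Z ω))
    (hrect : ∀ ω, ∀ x₁ y₁ x₂ y₂ : ℝ, x₁ ≤ y₁ → x₂ ≤ y₂ →
      0 ≤ Z ω (y₁, y₂) - Z ω (x₁, y₂) - Z ω (y₁, x₂) + Z ω (x₁, x₂))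
    {a₁ b₁ a₂ b₂ : ℝ} (hb : Integrable (fun ω => Z ω (b₁, b₂)) μ) :
    FiniteBracketing μ Z {p | Monotone p} fun (t : ↥(Icc a₁ b₁ ×ˢ Icc a₂ b₂)) p => p t := by
  intro ε hε
  let F : ℝ × ℝ → ℝ := fun t => ∫ ω, Z ω t ∂μ
  have hint : ∀ t ≤ (b₁, b₂), Integrable (fun ω => Z ω t) μ := fun t =>
    integrable_apply_of_le hZ h0 hmono hb
  have hF_mono : MonotoneOn F (Iic (b₁, b₂)) := monotoneOn_integral_apply hmono hint
  have hF₁ : MonotoneOn (fun x => F (x, b₂)) (Icc a₁ b₁) := fun x hx y hy hxy =>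
    hF_mono (a := (x, b₂)) (b := (y, b₂)) ⟨hx.2, le_rfl⟩ ⟨hy.2, le_rfl⟩ ⟨hxy, le_rfl⟩
  have hF₂ : MonotoneOn (fun y => F (b₁, y)) (Icc a₂ b₂) := fun x hx y hy hxy =>
    hF_mono (a := (b₁, x)) (b := (b₁, y)) ⟨le_rfl, hx.2⟩ ⟨le_rfl, hy.2⟩ ⟨le_rfl, hxy⟩
  obtain ⟨C₁, hC₁, hcell₁, hcov₁⟩ := hF₁.exists_finite_brackets_Icc (half_pos hε)
  obtain ⟨C₂, hC₂, hcell₂, hcov₂⟩ := hF₂.exists_finite_brackets_Icc (half_pos hε)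
  let lo : (ℕ → ℝ) × (ℕ → ℝ) → (ℕ → ℝ) × (ℕ → ℝ) → ℕ → ℝ × ℝ := fun c₁ c₂ r => (c₁.1 r, c₂.1 r)
  let up : (ℕ → ℝ) × (ℕ → ℝ) → (ℕ → ℝ) × (ℕ → ℝ) → ℕ → ℝ × ℝ := fun c₁ c₂ r => (c₁.2 r, c₂.2 r)
  have hlo_mem : ∀ c₁ ∈ C₁, ∀ c₂ ∈ C₂, ∀ r, lo c₁ c₂ r ∈ Icc (a₁, a₂) (b₁, b₂) :=
    fun c₁ hc₁ c₂ hc₂ r => Icc_prod_Icc a₁ b₁ a₂ b₂ ▸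
      ⟨((hcell₁ c₁ hc₁).2.2.1 r).1, ((hcell₂ c₂ hc₂).2.2.1 r).1⟩
  have hup_mem : ∀ c₁ ∈ C₁, ∀ c₂ ∈ C₂, ∀ r, up c₁ c₂ r ∈ Icc (a₁, a₂) (b₁, b₂) :=
    fun c₁ hc₁ c₂ hc₂ r => Icc_prod_Icc a₁ b₁ a₂ b₂ ▸
      ⟨((hcell₁ c₁ hc₁).2.2.1 r).2, ((hcell₂ c₂ hc₂).2.2.1 r).2⟩
  refine ⟨image2 (fun c₁ c₂ p => ⨅ r, p (lo c₁ c₂ r)) C₁ C₂ ∪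
    image2 (fun c₁ c₂ p => ⨆ r, p (up c₁ c₂ r)) C₁ C₂,
    (hC₁.image2 _ hC₂).union (hC₁.image2 _ hC₂), ?_, ?_⟩
  · rintro g (⟨c₁, hc₁, c₂, hc₂, rfl⟩ | ⟨c₁, hc₁, c₂, hc₂, rfl⟩)
    · exact ⟨.iInf fun r => measurable_pi_apply _, integrable_iInf_of_le
        (fun r => hint _ (hlo_mem c₁ hc₁ c₂ hc₂ r).2) (integrable_zero _ _ μ) fun r ω => h0 ω _⟩
    · exact ⟨.iSup fun r => measurable_pi_apply _, integrable_iSup_of_le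
        (fun r => hint _ (hup_mem c₁ hc₁ c₂ hc₂ r).2) (hint _ le_rfl)
        fun r ω => hmono ω (hup_mem c₁ hc₁ c₂ hc₂ r).2⟩
  · rintro ⟨t, ht₁, ht₂⟩
    obtain ⟨c₁, hc₁, hev₁⟩ := hcov₁ t.1 ht₁
    obtain ⟨c₂, hc₂, hev₂⟩ := hcov₂ t.2 ht₂
    have hev : ∀ᶠ r in atTop, lo c₁ c₂ r ≤ t ∧ t ≤ up c₁ c₂ r :=
      (hev₁.and hev₂).mono fun r h => ⟨⟨h.1.1, h.2.1⟩, ⟨h.1.2, h.2.2⟩⟩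
    refine ⟨_, mem_union_left _ (mem_image2_of_mem hc₁ hc₂), _,
      mem_union_right _ (mem_image2_of_mem hc₁ hc₂), fun p hp =>
        hp.ciInf_le_le_ciSup (fun r => (hlo_mem c₁ hc₁ c₂ hc₂ r).1)
          (fun r => (hup_mem c₁ hc₁ c₂ hc₂ r).2) hev, ?_⟩
    exact (integral_iSup_sub_integral_iInf_le_add hmono hrect hint
      (fun r s h => ⟨(hcell₁ c₁ hc₁).1 h, (hcell₂ c₂ hc₂).1 h⟩)
      (fun r s h => ⟨(hcell₁ c₁ hc₁).2.1 h, (hcell₂ c₂ hc₂).2.1 h⟩)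
      (hlo_mem c₁ hc₁ c₂ hc₂) (hup_mem c₁ hc₁ c₂ hc₂) (hev.mono fun r hr => hr.1.trans hr.2)
      (hcell₁ c₁ hc₁).2.2.2 (hcell₂ c₂ hc₂).2.2.2).trans_eq (add_halves ε)

end MonotoneField

theorem bivariate_glivenko_cantelli_general
    {Ω : Type*} [MeasurableSpace Ω] (μ : Measure Ω) [IsProbabilityMeasure μ]
    (a₁ b₁ a₂ b₂ : ℝ)
    (X : ℕ → Ω → (ℝ × ℝ → ℝ))
    (hX_indep : iIndepFun X μ)
    (hX_ident : ∀ n, IdentDistrib (X n) (X 0) μ μ)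
    (hX_nonneg : ∀ n, ∀ ω, ∀ t : ℝ × ℝ, 0 ≤ X n ω t)
    (hX_mono : ∀ n, ∀ ω, Monotone (X n ω))
    (hX_rect : ∀ n, ∀ ω, ∀ x₁ y₁ x₂ y₂ : ℝ, x₁ ≤ y₁ → x₂ ≤ y₂ →
      0 ≤ X n ω (y₁, y₂) - X n ω (x₁, y₂) - X n ω (y₁, x₂) + X n ω (x₁, x₂))
    (hX_int : Integrable (fun ω => X 0 ω (b₁, b₂)) μ)
    (F : ℝ × ℝ → ℝ) (hF : ∀ t : ℝ × ℝ, F t = ∫ ω, X 0 ω t ∂μ) :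
    ∀ᵐ ω ∂μ,
      Tendsto (fun n : ℕ => ⨆ t : (Set.Icc a₁ b₁ ×ˢ Set.Icc a₂ b₂ : Set (ℝ × ℝ)),
        |(n : ℝ)⁻¹ * ∑ m ∈ Finset.range n, X m ω t - F t|) atTop (𝓝 0) := by
  have hbr : FiniteBracketing μ (X 0) {p | Monotone p}
      fun (t : ↥(Icc a₁ b₁ ×ˢ Icc a₂ b₂)) p => p t :=
    finiteBracketing_eval_of_monotone_field (hX_ident 0).aemeasurable_fst (hX_nonneg 0) (hX_mono 0)
      (hX_rect 0) hX_int
  simpa only [hF] using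
    hbr.ae_tendsto_iSup_abs_sub hX_indep hX_ident hX_mono fun t => measurable_pi_apply _

/-- Almost-sure uniform law of large numbers for i.i.d. monotone random fields on `ℝ × ℝ`
(bivariate Glivenko–Cantelli theorem): if the paths are nonnegative, monotone for the
componentwise order, have nonnegative rectangle increments, and the value at the upper corner
is integrable, then the empirical means converge uniformly on the rectangle to the mean
function, almost surely. -/
theorem bivariate_glivenko_cantelli
    {Ω : Type*} [MeasurableSpace Ω] (μ : Measure Ω) [IsProbabilityMeasure μ]
    (a₁ b₁ a₂ b₂ : ℝ) (h₁ : a₁ ≤ b₁) (h₂ : a₂ ≤ b₂)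
    (X : ℕ → Ω → (ℝ × ℝ → ℝ))
    (hX_meas : ∀ n, Measurable (X n))
    (hX_indep : iIndepFun X μ)
    (hX_ident : ∀ n, IdentDistrib (X n) (X 0) μ μ)
    (hX_nonneg : ∀ n, ∀ ω, ∀ t : ℝ × ℝ, 0 ≤ X n ω t)
    (hX_mono : ∀ n, ∀ ω, Monotone (X n ω))
    (hX_rect : ∀ n, ∀ ω, ∀ x₁ y₁ x₂ y₂ : ℝ, x₁ ≤ y₁ → x₂ ≤ y₂ →
      0 ≤ X n ω (y₁, y₂) - X n ω (x₁, y₂) - X n ω (y₁, x₂) + X n ω (x₁, x₂))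
    (hX_int : Integrable (fun ω => X 0 ω (b₁, b₂)) μ)
    (F : ℝ × ℝ → ℝ) (hF : ∀ t : ℝ × ℝ, F t = ∫ ω, X 0 ω t ∂μ) :
    ∀ᵐ ω ∂μ,
      Tendsto (fun n : ℕ => ⨆ t : (Set.Icc a₁ b₁ ×ˢ Set.Icc a₂ b₂ : Set (ℝ × ℝ)),
        |(n : ℝ)⁻¹ * ∑ m ∈ Finset.range n, X m ω t - F t|) atTop (𝓝 0) :=
  bivariate_glivenko_cantelli_general μ a₁ b₁ a₂ b₂ X hX_indep hX_ident hX_nonneg hX_mono hX_rect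
    hX_int F hF
end

section
/- Let a < b be real numbers. Let f : ℝ → ℝ and fₙ : ℝ → ℝ (n ∈ ℕ) be Borel measurable functions such that f is bounded on [a,b], eVariationOn f (Set.Icc a b) < ∞, and fₙ → f uniformly on [a,b]. Let g and gₙ (n ∈ ℕ) be Stieltjes functions (monotone nondecreasing right-continuous functions ℝ → ℝ, with associated Lebesgue–Stieltjes measures g.measure and gₙ.measure), and assume sup_{x ∈ [a,b]} |gₙ(x) − g(x)| → 0 as n → ∞. Then sup_{t ∈ [a,b]} | ∫_{x ∈ Ioc a t} fₙ(x) ∂(gₙ.measure) − ∫_{x ∈ Ioc a t} f(x) ∂(g.measure) | → 0 as n → ∞. -/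
/-!
Split `∫ fₙ dgₙ - ∫ f dg` into `∫ (fₙ - f) dgₙ`, which is at most `‖fₙ - f‖∞ (gₙ b - gₙ a)`,
and `∫ f dgₙ - ∫ f dg`. For the latter write `f = P - Q` on `[a, b]` with `P`, `Q` monotone.
For monotone `P` the layer-cake formula expresses `∫_{(a,t]} (P - P a) dμ` through the
`μ`-measures of the superlevel sets `{P > P a + r} ∩ (a, t]`. These are intervals `(c, t]` or
`[c, t]`, whose `gₙ`- and `g`-measures differ by at most `2 ‖gₙ - g‖∞`, so
`|∫ f dgₙ - ∫ f dg| ≤ K ‖gₙ - g‖∞` with `K` depending only on `f`.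
-/

open Set Filter Topology MeasureTheory

section SupNorm

variable {α ι : Type*} {l : Filter α}

lemma tendsto_iSup_abs_nhds_zero [Nonempty ι] {F : α → ι → ℝ}
    (h : ∀ ε > 0, ∀ᶠ n in l, ∀ i, |F n i| ≤ ε) :
    Tendsto (fun n => ⨆ i, |F n i|) l (𝓝 0) := by
  refine tendsto_order.2 ⟨fun c hc => Eventually.of_forall fun n =>
    hc.trans_le (Real.iSup_nonneg fun i => abs_nonneg _), fun c hc => ?_⟩
  filter_upwards [h (c / 2) (half_pos hc)] with n hn
  exact (ciSup_le hn).trans_lt (half_lt_self hc)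

lemma tendsto_iSup_abs_nhds_zero_of_le [Nonempty ι] {F : α → ι → ℝ} {D : α → ℝ}
    (hF : ∀ᶠ n in l, ∀ i, |F n i| ≤ D n) (hD : Tendsto D l (𝓝 0)) :
    Tendsto (fun n => ⨆ i, |F n i|) l (𝓝 0) :=
  tendsto_iSup_abs_nhds_zero fun _ hε =>
    (hF.and (hD.eventually_le_const hε)).mono fun _ hn i => (hn.1 i).trans hn.2

lemma TendstoUniformlyOn.tendsto_iSup_abs_sub {F : α → ι → ℝ} {f : ι → ℝ} {s : Set ι}
    [Nonempty s] (h : TendstoUniformlyOn F f l s) :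
    Tendsto (fun n => ⨆ x : s, |F n x - f x|) l (𝓝 0) :=
  tendsto_iSup_abs_nhds_zero fun ε hε =>
    (Metric.tendstoUniformlyOn_iff.1 h ε hε).mono fun _ hn x => by
      rw [← Real.dist_eq, dist_comm]
      exact (hn x x.2).le

lemma TendstoUniformlyOn.eventually_abs_sub_le_iSup {F : α → ι → ℝ} {f : ι → ℝ} {s : Set ι}
    (h : TendstoUniformlyOn F f l s) :
    ∀ᶠ n in l, ∀ x ∈ s, |F n x - f x| ≤ ⨆ y : s, |F n y - f y| :=
  (Metric.tendstoUniformlyOn_iff.1 h 1 one_pos).mono fun n hn x hx =>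
    le_ciSup (f := fun y : s => |F n y - f y|) ⟨1, by
      rintro _ ⟨y, rfl⟩
      change |F n y - f y| ≤ 1
      rw [← Real.dist_eq, dist_comm]
      exact (hn y y.2).le⟩ ⟨x, hx⟩

lemma Monotone.abs_sub_le_iSup_Icc [Preorder ι] {u v : ι → ℝ} (hu : Monotone u)
    (hv : Monotone v) {a b x : ι} (hx : x ∈ Icc a b) :
    |u x - v x| ≤ ⨆ y : Icc a b, |u y - v y| :=
  le_ciSup (f := fun y : Icc a b => |u y - v y|) ⟨max |u a - v b| |u b - v a|, by
    rintro _ ⟨y, rfl⟩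
    exact abs_le_max_abs_abs (sub_le_sub (hu y.2.1) (hv y.2.2))
      (sub_le_sub (hu y.2.2) (hv y.2.1))⟩ ⟨x, hx⟩

end SupNorm

section LayerCake

variable {α : Type*} [MeasurableSpace α] {μ ν : Measure α} {s : Set α}

lemma abs_setIntegral_sub_le_of_abs_sub_le {φ f : α → ℝ} {δ : ℝ} (hs : MeasurableSet s)
    (hμs : μ s ≠ ⊤) (hφ : AEStronglyMeasurable φ (μ.restrict s)) (hf : IntegrableOn f s μ)
    (hδ : ∀ x ∈ s, |φ x - f x| ≤ δ) :
    |∫ x in s, φ x ∂μ - ∫ x in s, f x ∂μ| ≤ δ * μ.real s := by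
  have : IsFiniteMeasure (μ.restrict s) := ⟨by simpa using hμs.lt_top⟩
  have hdiff : IntegrableOn (φ - f) s μ :=
    Integrable.of_bound (hφ.sub hf.aestronglyMeasurable) δ (ae_restrict_of_forall_mem hs hδ)
  have hφs : IntegrableOn φ s μ := by simpa using hdiff.add hf
  rw [← integral_sub hφs hf]
  exact norm_setIntegral_le_of_norm_le_const hμs.lt_top fun x hx =>
    (Real.norm_eq_abs _).trans_le (hδ x hx)

lemma setIntegral_eq_integral_Ioc_measureReal_lt {f : α → ℝ} {M : ℝ} (hs : MeasurableSet s)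
    (hμs : μ s ≠ ⊤) (hf : Measurable f) (hf₀ : ∀ x ∈ s, 0 ≤ f x) (hfM : ∀ x ∈ s, f x ≤ M) :
    ∫ x in s, f x ∂μ = ∫ r in Ioc 0 M, μ.real ({x | r < f x} ∩ s) := by
  have : IsFiniteMeasure (μ.restrict s) := ⟨by simpa using hμs.lt_top⟩
  have hint : Integrable f (μ.restrict s) :=
    Integrable.of_bound hf.aestronglyMeasurable M (ae_restrict_of_forall_mem hs fun x hx => by
      rw [Real.norm_eq_abs, abs_of_nonneg (hf₀ x hx)]
      exact hfM x hx)
  rw [hint.integral_eq_integral_meas_lt (ae_restrict_of_forall_mem hs hf₀),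
    ← setIntegral_eq_of_subset_of_forall_sdiff_eq_zero measurableSet_Ioi Ioc_subset_Ioi_self]
  · exact setIntegral_congr_fun measurableSet_Ioi fun r _ =>
      measureReal_restrict_apply (measurableSet_lt measurable_const hf)
  · rintro r ⟨hr₀, hrM⟩
    have hMr : M < r := by
      simp only [mem_Ioc, not_and, not_le] at hrM
      exact hrM hr₀
    rw [show {x | r < f x} ∩ s = ∅ from
      eq_empty_of_forall_notMem fun x hx => (hfM x hx.2).not_gt (hMr.trans hx.1),
      measureReal_empty]

lemma abs_setIntegral_sub_le_of_superlevel_measureReal {f : α → ℝ} {M δ : ℝ}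
    (hs : MeasurableSet s) (hμs : μ s ≠ ⊤) (hνs : ν s ≠ ⊤) (hf : Measurable f)
    (hf₀ : ∀ x ∈ s, 0 ≤ f x) (hfM : ∀ x ∈ s, f x ≤ M) (hM : 0 ≤ M)
    (h : ∀ r > 0, |μ.real ({x | r < f x} ∩ s) - ν.real ({x | r < f x} ∩ s)| ≤ δ) :
    |∫ x in s, f x ∂μ - ∫ x in s, f x ∂ν| ≤ δ * M := by
  have hint : ∀ ρ : Measure α, ρ s ≠ ⊤ →
      IntegrableOn (fun r => ρ.real ({x | r < f x} ∩ s)) (Ioc 0 M) := fun ρ hρs => by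
    have hanti : Antitone fun r => ρ.real ({x | r < f x} ∩ s) := fun r r' hrr' =>
      measureReal_mono (inter_subset_inter_left _ fun _ hx => hrr'.trans_lt hx)
        (ne_top_of_le_ne_top hρs (measure_mono inter_subset_right))
    exact ((hanti.antitoneOn _).integrableOn_isCompact isCompact_Icc).mono_set
      Ioc_subset_Icc_self
  rw [setIntegral_eq_integral_Ioc_measureReal_lt hs hμs hf hf₀ hfM,
    setIntegral_eq_integral_Ioc_measureReal_lt hs hνs hf hf₀ hfM,
    ← integral_sub (hint μ hμs) (hint ν hνs)]
  have := norm_setIntegral_le_of_norm_le_const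
    (measure_Ioc_lt_top (μ := volume) (a := 0) (b := M)) fun r hr =>
    (Real.norm_eq_abs _).trans_le (h r hr.1)
  simpa [Real.volume_real_Ioc, hM] using this

end LayerCake

lemma IsUpperSet.inter_Ioc_eq {α : Type*} [ConditionallyCompleteLinearOrder α] {U : Set α}
    {a t : α} (hU : IsUpperSet U) (hne : (U ∩ Ioc a t).Nonempty) :
    ∃ c, (c ∈ Icc a t ∧ U ∩ Ioc a t = Ioc c t) ∨ (c ∈ Ioc a t ∧ U ∩ Ioc a t = Icc c t) := by
  have hbdd : BddBelow (U ∩ Ioc a t) := ⟨a, fun x hx => hx.2.1.le⟩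
  set c := sInf (U ∩ Ioc a t)
  have hc_le : ∀ x ∈ U ∩ Ioc a t, c ≤ x := fun x hx => csInf_le hbdd hx
  have hlt_mem : ∀ x, c < x → x ∈ U := fun x hcx => by
    obtain ⟨z, hz, hzx⟩ := exists_lt_of_csInf_lt hne hcx
    exact hU hzx.le hz.1
  have hac : a ≤ c := le_csInf hne fun x hx => hx.2.1.le
  obtain ⟨x₀, hx₀⟩ := hne
  refine ⟨c, ?_⟩
  by_cases hc : c ∈ U ∩ Ioc a t
  · refine Or.inr ⟨hc.2, Subset.antisymm (fun x hx => ⟨hc_le x hx, hx.2.2⟩) fun x hx => ?_⟩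
    rcases hx.1.eq_or_lt with rfl | hcx
    · exact hc
    · exact ⟨hlt_mem x hcx, hc.2.1.trans hcx, hx.2⟩
  · refine Or.inl ⟨⟨hac, (hc_le x₀ hx₀).trans hx₀.2.2⟩, Subset.antisymm
      (fun x hx => ⟨(hc_le x hx).lt_of_ne ?_, hx.2.2⟩)
      fun x hx => ⟨hlt_mem x hx.1, hac.trans_lt hx.1, hx.2⟩⟩
    rintro rfl
    exact hc hx

lemma Monotone.integrableOn_Ioc {P : ℝ → ℝ} (hP : Monotone P) {μ : Measure ℝ}
    [IsLocallyFiniteMeasure μ] {a t : ℝ} : IntegrableOn P (Ioc a t) μ :=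
  (hP.locallyIntegrable.integrableOn_isCompact isCompact_Icc).mono_set Ioc_subset_Icc_self

namespace StieltjesFunction

lemma measureReal_Ioc (g : StieltjesFunction ℝ) {a t : ℝ} (h : a ≤ t) :
    g.measure.real (Ioc a t) = g t - g a := by
  rw [measureReal_def, measure_Ioc, ENNReal.toReal_ofReal (sub_nonneg.2 (g.mono h))]

variable (g g' : StieltjesFunction ℝ) {a c t ε : ℝ}

lemma abs_measureReal_Ioc_sub_le (hε : ∀ x ∈ Icc a t, |g x - g' x| ≤ ε) (hc : c ∈ Icc a t) :
    |g.measure.real (Ioc c t) - g'.measure.real (Ioc c t)| ≤ 2 * ε := by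
  rw [g.measureReal_Ioc hc.2, g'.measureReal_Ioc hc.2]
  have hεt := abs_le.1 (hε t ⟨hc.1.trans hc.2, le_rfl⟩)
  have hεc := abs_le.1 (hε c hc)
  rw [abs_le]
  constructor <;> linarith

lemma abs_leftLim_sub_le (hε : ∀ x ∈ Icc a t, |g x - g' x| ≤ ε) (hc : c ∈ Ioc a t) :
    |Function.leftLim g c - Function.leftLim g' c| ≤ ε :=
  le_of_tendsto ((g.mono.tendsto_leftLim c).sub (g'.mono.tendsto_leftLim c)).abs
    (by filter_upwards [Ioo_mem_nhdsLT hc.1] with x hx using hε x ⟨hx.1.le, hx.2.le.trans hc.2⟩)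

lemma abs_measureReal_Icc_sub_le (hε : ∀ x ∈ Icc a t, |g x - g' x| ≤ ε) (hc : c ∈ Ioc a t) :
    |g.measure.real (Icc c t) - g'.measure.real (Icc c t)| ≤ 2 * ε := by
  rw [measureReal_def, measureReal_def, measure_Icc, measure_Icc,
    ENNReal.toReal_ofReal (sub_nonneg.2 ((g.mono.leftLim_le le_rfl).trans (g.mono hc.2))),
    ENNReal.toReal_ofReal (sub_nonneg.2 ((g'.mono.leftLim_le le_rfl).trans (g'.mono hc.2)))]
  have hεt := abs_le.1 (hε t ⟨hc.1.le.trans hc.2, le_rfl⟩)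
  have hεc := abs_le.1 (g.abs_leftLim_sub_le g' hε hc)
  rw [abs_le]
  constructor <;> linarith

lemma abs_measureReal_inter_Ioc_sub_le {U : Set ℝ} (hU : IsUpperSet U) (hat : a ≤ t)
    (hε : ∀ x ∈ Icc a t, |g x - g' x| ≤ ε) :
    |g.measure.real (U ∩ Ioc a t) - g'.measure.real (U ∩ Ioc a t)| ≤ 2 * ε := by
  rcases (U ∩ Ioc a t).eq_empty_or_nonempty with h | h
  · have := (abs_nonneg _).trans (hε t ⟨hat, le_rfl⟩)
    simp only [h, measureReal_empty, sub_self, abs_zero]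
    linarith
  obtain ⟨c, ⟨hc, h⟩ | ⟨hc, h⟩⟩ := hU.inter_Ioc_eq h <;> rw [h]
  · exact g.abs_measureReal_Ioc_sub_le g' hε hc
  · exact g.abs_measureReal_Icc_sub_le g' hε hc

lemma abs_setIntegral_Ioc_sub_le_of_monotone {P : ℝ → ℝ} (hP : Monotone P) (hat : a ≤ t)
    (hε : ∀ x ∈ Icc a t, |g x - g' x| ≤ ε) :
    |∫ x in Ioc a t, P x ∂g.measure - ∫ x in Ioc a t, P x ∂g'.measure|
      ≤ 2 * ε * (P t - P a + |P a|) := by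
  have hsplit : ∀ G : StieltjesFunction ℝ, ∫ x in Ioc a t, P x ∂G.measure
      = ∫ x in Ioc a t, (P x - P a) ∂G.measure + G.measure.real (Ioc a t) * P a := fun G => by
    rw [integral_sub hP.integrableOn_Ioc (integrableOn_const measure_Ioc_lt_top.ne),
      setIntegral_const, smul_eq_mul]
    ring
  have hlayer : |∫ x in Ioc a t, (P x - P a) ∂g.measure - ∫ x in Ioc a t, (P x - P a) ∂g'.measure|
      ≤ 2 * ε * (P t - P a) :=
    abs_setIntegral_sub_le_of_superlevel_measureReal measurableSet_Ioc measure_Ioc_lt_top.ne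
      measure_Ioc_lt_top.ne (hP.measurable.sub_const _) (fun x hx => sub_nonneg.2 (hP hx.1.le))
      (fun x hx => sub_le_sub_right (hP hx.2) _) (sub_nonneg.2 (hP hat)) fun r _ =>
        g.abs_measureReal_inter_Ioc_sub_le g'
          (fun _ _ hxy hx => hx.trans_le (sub_le_sub_right (hP hxy) _)) hat hε
  have hmass := g.abs_measureReal_Ioc_sub_le g' hε (left_mem_Icc.2 hat)
  rw [hsplit g, hsplit g']
  calc _ = |(∫ x in Ioc a t, (P x - P a) ∂g.measure - ∫ x in Ioc a t, (P x - P a) ∂g'.measure)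
          + (g.measure.real (Ioc a t) - g'.measure.real (Ioc a t)) * P a| := by
        congr 1
        ring
    _ ≤ 2 * ε * (P t - P a) + 2 * ε * |P a| := (abs_add_le _ _).trans <| by
        rw [abs_mul]
        exact add_le_add hlayer (mul_le_mul_of_nonneg_right hmass (abs_nonneg _))
    _ = 2 * ε * (P t - P a + |P a|) := by ring

end StieltjesFunction

namespace BoundedVariationOn

lemma exists_monotone_sub_eqOn {α : Type*} [LinearOrder α] {f : α → ℝ} {a b : α}
    (hf : BoundedVariationOn f (Icc a b)) (hab : a ≤ b) :
    ∃ P Q : α → ℝ, Monotone P ∧ Monotone Q ∧ EqOn f (P - Q) (Icc a b) := by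
  obtain ⟨p, q, hp, hq, rfl⟩ := hf.locallyBoundedVariationOn.exists_monotoneOn_sub_monotoneOn
  refine ⟨fun x => p (projIcc a b hab x), fun x => q (projIcc a b hab x),
    fun x y hxy => hp (projIcc a b hab x).2 (projIcc a b hab y).2 (monotone_projIcc hab hxy),
    fun x y hxy => hq (projIcc a b hab x).2 (projIcc a b hab y).2 (monotone_projIcc hab hxy),
    fun x hx => by simp [projIcc_of_mem hab hx]⟩

variable {f : ℝ → ℝ} {a b : ℝ}

lemma integrableOn_Ioc (hf : BoundedVariationOn f (Icc a b)) (hab : a ≤ b) {t : ℝ} (htb : t ≤ b)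
    (μ : Measure ℝ) [IsLocallyFiniteMeasure μ] : IntegrableOn f (Ioc a t) μ := by
  obtain ⟨P, Q, hP, hQ, hfPQ⟩ := hf.exists_monotone_sub_eqOn hab
  exact (hP.integrableOn_Ioc.sub hQ.integrableOn_Ioc).congr_fun
    (hfPQ.mono (Ioc_subset_Icc_self.trans (Icc_subset_Icc_right htb))).symm measurableSet_Ioc

lemma exists_abs_setIntegral_Ioc_sub_le (hf : BoundedVariationOn f (Icc a b)) (hab : a ≤ b) :
    ∃ K, ∀ (g g' : StieltjesFunction ℝ) (ε : ℝ), ∀ t ∈ Icc a b,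
      (∀ x ∈ Icc a t, |g x - g' x| ≤ ε) →
      |∫ x in Ioc a t, f x ∂g.measure - ∫ x in Ioc a t, f x ∂g'.measure| ≤ K * ε := by
  obtain ⟨P, Q, hP, hQ, hfPQ⟩ := hf.exists_monotone_sub_eqOn hab
  refine ⟨2 * (P b - P a + |P a|) + 2 * (Q b - Q a + |Q a|), fun g g' ε t ht hε => ?_⟩
  have hε₀ : 0 ≤ ε := (abs_nonneg _).trans (hε t ⟨ht.1, le_rfl⟩)
  have hsplit : ∀ G : StieltjesFunction ℝ, ∫ x in Ioc a t, f x ∂G.measure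
      = ∫ x in Ioc a t, P x ∂G.measure - ∫ x in Ioc a t, Q x ∂G.measure := fun G => by
    rw [← integral_sub hP.integrableOn_Ioc hQ.integrableOn_Ioc]
    exact setIntegral_congr_fun measurableSet_Ioc
      (hfPQ.mono (Ioc_subset_Icc_self.trans (Icc_subset_Icc_right ht.2)))
  have hPest := g.abs_setIntegral_Ioc_sub_le_of_monotone g' hP ht.1 hε
  have hQest := g.abs_setIntegral_Ioc_sub_le_of_monotone g' hQ ht.1 hε
  have hPt := mul_le_mul_of_nonneg_left (hP ht.2) hε₀
  have hQt := mul_le_mul_of_nonneg_left (hQ ht.2) hε₀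
  rw [hsplit g, hsplit g', sub_sub_sub_comm]
  refine (abs_sub _ _).trans ((add_le_add hPest hQest).trans ?_)
  linarith

end BoundedVariationOn

theorem uniform_helly_bray_general (a b : ℝ) (hab : a < b)
    (f : ℝ → ℝ) (fn : ℕ → ℝ → ℝ)
    (hfn_meas : ∀ n, Measurable (fn n))
    (hf_var : eVariationOn f (Set.Icc a b) < ⊤)
    (hfn_unif : TendstoUniformlyOn fn f atTop (Set.Icc a b))
    (g : StieltjesFunction ℝ) (gn : ℕ → StieltjesFunction ℝ)
    (hg_unif : Tendsto (fun n => ⨆ x : Set.Icc a b, |gn n x - g x|) atTop (𝓝 0)) :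
    Tendsto (fun n => ⨆ t : Set.Icc a b,
        |(∫ x in Set.Ioc a (t : ℝ), fn n x ∂((gn n).measure))
          - ∫ x in Set.Ioc a (t : ℝ), f x ∂g.measure|)
      atTop (𝓝 0) := by
  have hf : BoundedVariationOn f (Icc a b) := hf_var.ne
  have : Nonempty (Icc a b) := ⟨⟨a, left_mem_Icc.2 hab.le⟩⟩
  obtain ⟨K, hK⟩ := hf.exists_abs_setIntegral_Ioc_sub_le hab.le
  have hgn_le : ∀ n, ∀ x ∈ Icc a b, |gn n x - g x| ≤ ⨆ y : Icc a b, |gn n y - g y| :=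
    fun n _ hx => (gn n).mono.abs_sub_le_iSup_Icc g.mono hx
  have hgn : ∀ x ∈ Icc a b, Tendsto (fun n => gn n x) atTop (𝓝 (g x)) := fun x hx =>
    tendsto_sub_nhds_zero_iff.1 (squeeze_zero_norm (fun n => hgn_le n x hx) hg_unif)
  refine tendsto_iSup_abs_nhds_zero_of_le (D := fun n =>
    (⨆ x : Icc a b, |fn n x - f x|) * (gn n b - gn n a) + K * ⨆ x : Icc a b, |gn n x - g x|)
    ?_ ?_
  · filter_upwards [hfn_unif.eventually_abs_sub_le_iSup] with n hfn_le ⟨t, ht⟩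
    have hsub : Ioc a t ⊆ Icc a b := Ioc_subset_Icc_self.trans (Icc_subset_Icc_right ht.2)
    have hfn_close := abs_setIntegral_sub_le_of_abs_sub_le measurableSet_Ioc
      (measure_Ioc_lt_top (μ := (gn n).measure)).ne (hfn_meas n).aestronglyMeasurable
      (hf.integrableOn_Ioc hab.le ht.2 _) fun x hx => hfn_le x (hsub hx)
    have hgn_close := hK (gn n) g _ t ht fun x hx => hgn_le n x ⟨hx.1, hx.2.trans ht.2⟩
    rw [(gn n).measureReal_Ioc ht.1] at hfn_close
    have hδ₀ := (abs_nonneg _).trans (hfn_le a (left_mem_Icc.2 hab.le))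
    have hgt := mul_le_mul_of_nonneg_left (sub_le_sub_right ((gn n).mono ht.2) (gn n a)) hδ₀
    exact (abs_sub_le _ _ _).trans (by linarith)
  · simpa using (hfn_unif.tendsto_iSup_abs_sub.mul
      ((hgn b (right_mem_Icc.2 hab.le)).sub (hgn a (left_mem_Icc.2 hab.le)))).add
      (hg_unif.const_mul K)

/-- Uniform Helly–Bray-type continuity of the Stieltjes integral `(f, g) ↦ ∫_{(a,t]} f dg`:
if `fₙ → f` uniformly on `[a,b]` with `f` bounded and of finite variation there, and the
Stieltjes functions `gₙ` converge to `g` uniformly on `[a,b]`, then the integrals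
`∫_{(a,t]} fₙ dgₙ` converge to `∫_{(a,t]} f dg` uniformly in `t ∈ [a,b]`. -/
theorem uniform_helly_bray (a b : ℝ) (hab : a < b)
    (f : ℝ → ℝ) (fn : ℕ → ℝ → ℝ)
    (hf_meas : Measurable f) (hfn_meas : ∀ n, Measurable (fn n))
    (hf_bdd : ∃ C : ℝ, ∀ x ∈ Set.Icc a b, |f x| ≤ C)
    (hf_var : eVariationOn f (Set.Icc a b) < ⊤)
    (hfn_unif : TendstoUniformlyOn fn f atTop (Set.Icc a b))
    (g : StieltjesFunction ℝ) (gn : ℕ → StieltjesFunction ℝ)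
    (hg_unif : Tendsto (fun n => ⨆ x : Set.Icc a b, |gn n x - g x|) atTop (𝓝 0)) :
    Tendsto (fun n => ⨆ t : Set.Icc a b,
        |(∫ x in Set.Ioc a (t : ℝ), fn n x ∂((gn n).measure))
          - ∫ x in Set.Ioc a (t : ℝ), f x ∂g.measure|)
      atTop (𝓝 0) :=
  uniform_helly_bray_general a b hab f fn hfn_meas hf_var hfn_unif g gn hg_unif
end

section
/- Let ν be a finite measure on ℝ × ℝ (with the Borel product σ-algebra), let s ≤ τ₁ and s ≤ τ₂ be real numbers, and set A := (Ioc s τ₁) ×ˢ (Ioc s τ₂). Let f : ℝ × ℝ → ℝ be measurable with f ≥ 0, and assume ν({x ∈ A | f x = 0}) = 0 and that the function x ↦ (f x)⁻¹ is ν-integrable on A (with the convention 0⁻¹ = 0). Then, as ε decreases to 0 along positive reals, sup_{(t₁,t₂) ∈ [s,τ₁]×[s,τ₂]} | ∫_{x ∈ (Ioc s t₁) ×ˢ (Ioc s t₂)} (max (f x) ε)⁻¹ ∂ν − ∫_{x ∈ (Ioc s t₁) ×ˢ (Ioc s t₂)} (f x)⁻¹ ∂ν | → 0; i.e., this supremum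 tends to 0 along the filter 𝓝[>] 0. -/
/-!
On the rectangle `A`, `f > 0` almost everywhere, so `(f ∨ ε)⁻¹ ≤ f⁻¹` and `(f ∨ ε)⁻¹ = f⁻¹` once
`ε < f`; dominated convergence gives `∫_A (f ∨ ε)⁻¹ → ∫_A f⁻¹`. Because the perturbation only
lowers the integrand, its effect on any sub-rectangle `R ⊆ A` is at most its effect on `A`,
which makes the convergence uniform.
-/

open Filter Topology MeasureTheory

section

variable {α : Type*} [MeasurableSpace α] {μ : Measure α}

theorem ae_restrict_pos_of_measure_zero_eq_zero {s : Set α} (hs : MeasurableSet s) {f : α → ℝ}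
    (hf_nonneg : ∀ x, 0 ≤ f x) (hnull : μ {x ∈ s | f x = 0} = 0) :
    ∀ᵐ x ∂μ.restrict s, 0 < f x := by
  rw [ae_restrict_iff' hs, ae_iff]
  convert hnull using 2
  ext x
  simpa using fun _ => (hf_nonneg x).ge_iff_eq'

theorem abs_setIntegral_sub_le_of_ae_le {g h : α → ℝ} {s t : Set α} (hst : s ⊆ t)
    (hg : IntegrableOn g t μ) (hh : IntegrableOn h t μ) (hgh : g ≤ᵐ[μ.restrict t] h) :
    |∫ x in s, g x ∂μ - ∫ x in s, h x ∂μ| ≤ ∫ x in t, h x ∂μ - ∫ x in t, g x ∂μ := by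
  have hgh_s : g ≤ᵐ[μ.restrict s] h := ae_restrict_of_ae_restrict_of_subset hst hgh
  have hmono : ∫ x in s, g x ∂μ ≤ ∫ x in s, h x ∂μ :=
    setIntegral_mono_ae_restrict (hg.mono_set hst) (hh.mono_set hst) hgh_s
  rw [abs_sub_comm, abs_of_nonneg (sub_nonneg.2 hmono), ← integral_sub (hh.mono_set hst)
    (hg.mono_set hst), ← integral_sub hh hg]
  exact setIntegral_mono_set (hh.sub hg) (hgh.mono fun x hx => sub_nonneg.2 hx) hst.eventuallyLE

theorem norm_inv_max_le_inv {a : ℝ} (ha : 0 < a) (ε : ℝ) : ‖(max a ε)⁻¹‖ ≤ a⁻¹ := by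
  rw [Real.norm_of_nonneg (inv_nonneg.2 (ha.le.trans (le_max_left a ε)))]
  exact inv_anti₀ ha (le_max_left a ε)

variable {f : α → ℝ} (hf : AEMeasurable f μ) (hpos : ∀ᵐ x ∂μ, 0 < f x)
  (hint : Integrable (fun x => (f x)⁻¹) μ)
include hf hpos hint

theorem integrable_inv_max (ε : ℝ) : Integrable (fun x => (max (f x) ε)⁻¹) μ :=
  hint.mono' (hf.max aemeasurable_const).inv.aestronglyMeasurable
    (hpos.mono fun _ hx => norm_inv_max_le_inv hx ε)

theorem tendsto_integral_inv_max :
    Tendsto (fun ε => ∫ x, (max (f x) ε)⁻¹ ∂μ) (𝓝 0) (𝓝 (∫ x, (f x)⁻¹ ∂μ)) := by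
  refine tendsto_integral_filter_of_dominated_convergence (fun x => (f x)⁻¹)
    (Eventually.of_forall fun _ => (hf.max aemeasurable_const).inv.aestronglyMeasurable)
    (Eventually.of_forall fun ε => hpos.mono fun _ hx => norm_inv_max_le_inv hx ε) hint ?_
  filter_upwards [hpos] with x hx
  refine tendsto_const_nhds.congr' ?_
  filter_upwards [eventually_lt_nhds hx] with ε hε
  rw [max_eq_left hε.le]

end

theorem tendsto_iSup_of_forall_le {α ι : Type*} {l : Filter α} {F : α → ι → ℝ} {g : α → ℝ}
    (hle : ∀ᶠ a in l, ∀ i, F a i ≤ g a) (hF_nonneg : ∀ a i, 0 ≤ F a i)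
    (hg : Tendsto g l (𝓝 0)) :
    Tendsto (fun a => ⨆ i, F a i) l (𝓝 0) := by
  have hg_abs : Tendsto (fun a => |g a|) l (𝓝 0) := by simpa using hg.abs
  refine tendsto_of_tendsto_of_tendsto_of_le_of_le' tendsto_const_nhds hg_abs
    (Eventually.of_forall fun a => Real.iSup_nonneg (hF_nonneg a)) ?_
  filter_upwards [hle] with a ha
  exact Real.iSup_le (fun i => (ha i).trans (le_abs_self _)) (abs_nonneg _)

theorem uniform_tendsto_perturbed_inv_integral_general
    (ν : Measure (ℝ × ℝ))
    (s τ₁ τ₂ : ℝ)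
    (f : ℝ × ℝ → ℝ) (hf : Measurable f) (hf_nonneg : ∀ x, 0 ≤ f x)
    (hnull : ν {x ∈ (Set.Ioc s τ₁ ×ˢ Set.Ioc s τ₂ : Set (ℝ × ℝ)) | f x = 0} = 0)
    (hint : IntegrableOn (fun x => (f x)⁻¹) (Set.Ioc s τ₁ ×ˢ Set.Ioc s τ₂) ν) :
    Tendsto (fun ε : ℝ => ⨆ t : (Set.Icc s τ₁ ×ˢ Set.Icc s τ₂ : Set (ℝ × ℝ)),
        |(∫ x in Set.Ioc s (t : ℝ × ℝ).1 ×ˢ Set.Ioc s (t : ℝ × ℝ).2, (max (f x) ε)⁻¹ ∂ν)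
          - ∫ x in Set.Ioc s (t : ℝ × ℝ).1 ×ˢ Set.Ioc s (t : ℝ × ℝ).2, (f x)⁻¹ ∂ν|)
      (𝓝[>] 0) (𝓝 0) := by
  set A : Set (ℝ × ℝ) := Set.Ioc s τ₁ ×ˢ Set.Ioc s τ₂
  have hpos : ∀ᵐ x ∂ν.restrict A, 0 < f x :=
    ae_restrict_pos_of_measure_zero_eq_zero (measurableSet_Ioc.prod measurableSet_Ioc)
      hf_nonneg hnull
  have hle : ∀ ε, (fun x => (max (f x) ε)⁻¹) ≤ᵐ[ν.restrict A] fun x => (f x)⁻¹ := fun ε =>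
    hpos.mono fun _ hx => inv_anti₀ hx (le_max_left _ _)
  have hsub : ∀ t ∈ Set.Icc s τ₁ ×ˢ Set.Icc s τ₂, Set.Ioc s t.1 ×ˢ Set.Ioc s t.2 ⊆ A :=
    fun t ht => Set.prod_mono (Set.Ioc_subset_Ioc_right ht.1.2) (Set.Ioc_subset_Ioc_right ht.2.2)
  refine tendsto_iSup_of_forall_le (Eventually.of_forall fun ε t =>
    abs_setIntegral_sub_le_of_ae_le (hsub t t.2)
      (integrable_inv_max hf.aemeasurable hpos hint ε) hint (hle ε))
    (fun _ _ => abs_nonneg _) ?_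
  simpa using ((tendsto_integral_inv_max hf.aemeasurable hpos hint).mono_left
    nhdsWithin_le_nhds).const_sub (∫ x in A, (f x)⁻¹ ∂ν)

/-- Uniform ε-perturbation for bivariate conditional transition rates: if the finite measure `ν`
does not charge the zero set of the nonnegative function `f` on the rectangle
`(s,τ₁] × (s,τ₂]` and `f⁻¹` is `ν`-integrable there, then the perturbed integrals
`∫ (f ∨ ε)⁻¹ dν` over `(s,t₁] × (s,t₂]` converge, uniformly in `(t₁,t₂) ∈ [s,τ₁] × [s,τ₂]`,
to the unperturbed integrals `∫ f⁻¹ dν` as `ε ↓ 0`. -/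
theorem uniform_tendsto_perturbed_inv_integral
    (ν : Measure (ℝ × ℝ)) [IsFiniteMeasure ν]
    (s τ₁ τ₂ : ℝ) (h₁ : s ≤ τ₁) (h₂ : s ≤ τ₂)
    (f : ℝ × ℝ → ℝ) (hf : Measurable f) (hf_nonneg : ∀ x, 0 ≤ f x)
    (hnull : ν {x ∈ (Set.Ioc s τ₁ ×ˢ Set.Ioc s τ₂ : Set (ℝ × ℝ)) | f x = 0} = 0)
    (hint : IntegrableOn (fun x => (f x)⁻¹) (Set.Ioc s τ₁ ×ˢ Set.Ioc s τ₂) ν) :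
    Tendsto (fun ε : ℝ => ⨆ t : (Set.Icc s τ₁ ×ˢ Set.Icc s τ₂ : Set (ℝ × ℝ)),
        |(∫ x in Set.Ioc s (t : ℝ × ℝ).1 ×ˢ Set.Ioc s (t : ℝ × ℝ).2, (max (f x) ε)⁻¹ ∂ν)
          - ∫ x in Set.Ioc s (t : ℝ × ℝ).1 ×ˢ Set.Ioc s (t : ℝ × ℝ).2, (f x)⁻¹ ∂ν|)
      (𝓝[>] 0) (𝓝 0) :=
  uniform_tendsto_perturbed_inv_integral_general ν s τ₁ τ₂ f hf hf_nonneg hnull hint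
end

section
/- Let (Ω, 𝒜, μ) be a probability space, let a ≤ b be real numbers, and let X : ℕ → Ω → (ℝ → ℝ) be a sequence of random functions that are independent and identically distributed (as random elements of ℝ → ℝ with the product σ-algebra, each evaluation ω ↦ X n ω t being measurable). Assume that for every n and every ω, the path t ↦ X n ω t is nonnegative and monotone (nondecreasing), and that ω ↦ X 0 ω b is μ-integrable. Define F(t) := ∫ X 0 ω t dμ(ω). Then for μ-almost every ω, sup_{t ∈ [a,b]} | (1/n) Σ_{m=0}^{n−1} X m ω t − F(t) | → 0 as n → ∞. -/
/-!
Partition `[a, b]` at the points where the mean function `F` has risen by another `δ`, so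
that `F` oscillates by at most `δ` on each open cell. On a cell `(s, s')` a monotone path lies
between its right limit at `s` and its left limit at `s'`; both are countable infima/suprema of
evaluations, hence measurable functionals of the path, and by monotone convergence their means
differ by at most `δ`. These brackets, together with the evaluations at the partition points,
are finitely many, so the strong law for finitely many real i.i.d. sequences makes the empirical
means uniformly `2δ`-close to `F` eventually, almost surely.
-/

open Filter Topology MeasureTheory ProbabilityTheory Set

section Bracketing

variable {Ω E : Type*} [MeasurableSpace Ω] [MeasurableSpace E] {μ : Measure Ω}

theorem strong_law_ae_comp {X : ℕ → Ω → E} (hindep : iIndepFun X μ)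
    (hident : ∀ n, IdentDistrib (X n) (X 0) μ μ) {g : E → ℝ} (hg : Measurable g)
    (hint : Integrable (fun ω => g (X 0 ω)) μ) :
    ∀ᵐ ω ∂μ, Tendsto (fun n : ℕ => (n : ℝ)⁻¹ * ∑ m ∈ Finset.range n, g (X m ω))
      atTop (𝓝 (∫ ω, g (X 0 ω) ∂μ)) := by
  filter_upwards [strong_law_ae_real (fun n ω => g (X n ω)) hint
    (fun i j hij => (hindep.indepFun hij).comp hg hg) (fun n => (hident n).comp hg)] with ω hω
  simpa only [div_eq_inv_mul] using hω

theorem ae_eventually_forall_abs_average_sub_integral_lt {X : ℕ → Ω → E}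
    (hindep : iIndepFun X μ) (hident : ∀ n, IdentDistrib (X n) (X 0) μ μ)
    {G : Set (E → ℝ)} (hG : G.Finite) (hG_meas : ∀ g ∈ G, Measurable g)
    (hG_int : ∀ g ∈ G, Integrable (fun ω => g (X 0 ω)) μ) {δ : ℝ} (hδ : 0 < δ) :
    ∀ᵐ ω ∂μ, ∀ᶠ n : ℕ in atTop, ∀ g ∈ G,
      |(n : ℝ)⁻¹ * ∑ m ∈ Finset.range n, g (X m ω) - ∫ ω, g (X 0 ω) ∂μ| < δ := by
  have h := (ae_ball_iff hG.countable).2 fun g hg =>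
    strong_law_ae_comp hindep hident (hG_meas g hg) (hG_int g hg)
  filter_upwards [h] with ω hω
  exact hG.eventually_all.2 fun g hg => (hω g hg).eventually (eventually_abs_sub_lt _ hδ)

structure IsBracket (μ : Measure Ω) (Y : Ω → E) (S : Set E) (δ : ℝ) (g : E → ℝ)
    (p : (E → ℝ) × (E → ℝ)) : Prop where
  measurable_fst : Measurable p.1
  measurable_snd : Measurable p.2
  integrable_fst : Integrable (fun ω => p.1 (Y ω)) μ
  integrable_snd : Integrable (fun ω => p.2 (Y ω)) μ
  fst_le : ∀ x ∈ S, p.1 x ≤ g x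
  le_snd : ∀ x ∈ S, g x ≤ p.2 x
  integral_snd_sub_integral_fst_le : ∫ ω, p.2 (Y ω) ∂μ - ∫ ω, p.1 (Y ω) ∂μ ≤ δ

theorem isBracket_self {Y : Ω → E} {S : Set E} {δ : ℝ} {g : E → ℝ} (hg : Measurable g)
    (hint : Integrable (fun ω => g (Y ω)) μ) (hδ : 0 ≤ δ) : IsBracket μ Y S δ g (g, g) where
  measurable_fst := hg
  measurable_snd := hg
  integrable_fst := hint
  integrable_snd := hint
  fst_le _ _ := le_rfl
  le_snd _ _ := le_rfl
  integral_snd_sub_integral_fst_le := by simpa using hδ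

theorem ae_eventually_forall_abs_average_sub_integral_le_of_isBracket {X : ℕ → Ω → E}
    {S : Set E} (hXS : ∀ m ω, X m ω ∈ S) (hindep : iIndepFun X μ)
    (hident : ∀ n, IdentDistrib (X n) (X 0) μ μ) {ι : Type*} {h : ι → E → ℝ}
    (hint : ∀ t, Integrable (fun ω => h t (X 0 ω)) μ) {δ : ℝ} (hδ : 0 < δ)
    {B : Set ((E → ℝ) × (E → ℝ))} (hB : B.Finite)
    (hcover : ∀ t, ∃ p ∈ B, IsBracket μ (X 0) S δ (h t) p) :
    ∀ᵐ ω ∂μ, ∀ᶠ n : ℕ in atTop, ∀ t,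
      |(n : ℝ)⁻¹ * ∑ m ∈ Finset.range n, h t (X m ω) - ∫ ω, h t (X 0 ω) ∂μ| ≤ 2 * δ := by
  choose p hpB hp using hcover
  have hfin : (range p).Finite := hB.subset (range_subset_iff.2 hpB)
  have hfst : ∀ t, (p t).1 ∈ Prod.fst '' range p ∪ Prod.snd '' range p := fun t =>
    Or.inl (mem_image_of_mem _ (mem_range_self t))
  have hsnd : ∀ t, (p t).2 ∈ Prod.fst '' range p ∪ Prod.snd '' range p := fun t =>
    Or.inr (mem_image_of_mem _ (mem_range_self t))
  have hslln := ae_eventually_forall_abs_average_sub_integral_lt hindep hident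
    ((hfin.image _).union (hfin.image _))
    (by rintro _ (⟨_, ⟨t, rfl⟩, rfl⟩ | ⟨_, ⟨t, rfl⟩, rfl⟩)
        exacts [(hp t).measurable_fst, (hp t).measurable_snd])
    (by rintro _ (⟨_, ⟨t, rfl⟩, rfl⟩ | ⟨_, ⟨t, rfl⟩, rfl⟩)
        exacts [(hp t).integrable_fst, (hp t).integrable_snd]) hδ
  filter_upwards [hslln] with ω hω
  filter_upwards [hω] with n hn t
  have hconv_fst := hn _ (hfst t)
  have hconv_snd := hn _ (hsnd t)
  have havg_low : (n : ℝ)⁻¹ * ∑ m ∈ Finset.range n, (p t).1 (X m ω)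
      ≤ (n : ℝ)⁻¹ * ∑ m ∈ Finset.range n, h t (X m ω) := by
    gcongr with m
    exact (hp t).fst_le _ (hXS m ω)
  have havg_up : (n : ℝ)⁻¹ * ∑ m ∈ Finset.range n, h t (X m ω)
      ≤ (n : ℝ)⁻¹ * ∑ m ∈ Finset.range n, (p t).2 (X m ω) := by
    gcongr with m
    exact (hp t).le_snd _ (hXS m ω)
  have hint_low : ∫ ω, (p t).1 (X 0 ω) ∂μ ≤ ∫ ω, h t (X 0 ω) ∂μ :=
    integral_mono (hp t).integrable_fst (hint t) fun ω => (hp t).fst_le _ (hXS 0 ω)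
  have hint_up : ∫ ω, h t (X 0 ω) ∂μ ≤ ∫ ω, (p t).2 (X 0 ω) ∂μ :=
    integral_mono (hint t) (hp t).integrable_snd fun ω => (hp t).le_snd _ (hXS 0 ω)
  have hgap := (hp t).integral_snd_sub_integral_fst_le
  rw [abs_lt] at hconv_fst hconv_snd
  rw [abs_le]
  constructor <;> linarith [hconv_fst.1, hconv_snd.2]

theorem ae_tendsto_iSup_abs_of_forall_pos {ι : Type*} [Nonempty ι] {D : ℕ → Ω → ι → ℝ}
    (h : ∀ ε > 0, ∀ᵐ ω ∂μ, ∀ᶠ n : ℕ in atTop, ∀ t, |D n ω t| ≤ ε) :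
    ∀ᵐ ω ∂μ, Tendsto (fun n => ⨆ t, |D n ω t|) atTop (𝓝 0) := by
  have hj : ∀ᵐ ω ∂μ, ∀ j : ℕ, ∀ᶠ n : ℕ in atTop, ∀ t, |D n ω t| ≤ 1 / (j + 1) :=
    ae_all_iff.2 fun j => h _ Nat.one_div_pos_of_nat
  filter_upwards [hj] with ω hω
  refine Metric.tendsto_nhds.2 fun ε hε => ?_
  obtain ⟨j, hjε⟩ := exists_nat_one_div_lt hε
  filter_upwards [hω j] with n hn
  rw [Real.dist_0_eq_abs, abs_of_nonneg (Real.iSup_nonneg fun t => abs_nonneg _)]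
  exact (ciSup_le hn).trans_lt hjε

end Bracketing

theorem exists_partition_oscillation_le {F : ℝ → ℝ} {a b δ : ℝ} (hab : a ≤ b)
    (hF : MonotoneOn F (Icc a b)) (hδ : 0 < δ) :
    ∃ (k : ℕ) (T : ℕ → ℝ), T 0 = a ∧ T k = b ∧ (∀ i, T i ∈ Icc a b) ∧
      ∀ i, ∀ x ∈ Ioo (T i) (T (i + 1)), ∀ y ∈ Ioo (T i) (T (i + 1)), F y ≤ F x + δ := by
  obtain ⟨k, hk⟩ : ∃ k : ℕ, F b - F a < k * δ := by
    obtain ⟨k, hk⟩ := exists_nat_gt ((F b - F a) / δ)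
    exact ⟨k, (div_lt_iff₀ hδ).1 hk⟩
  -- `sInf (L i)` is where `F` first reaches `F a + i * δ`; as `F` need not be right-continuous
  -- this value may not be attained there, so only the open cells are controlled.
  set L : ℕ → Set ℝ := fun i => insert b {s ∈ Icc a b | F a + i * δ ≤ F s}
  have hL : ∀ i, L i ⊆ Icc a b := fun i => insert_subset ⟨hab, le_rfl⟩ fun _ hs => hs.1
  have hL_bdd : ∀ i, BddBelow (L i) := fun i => ⟨a, fun s hs => (hL i hs).1⟩
  have hT : ∀ i, sInf (L i) ∈ Icc a b := fun i =>
    ⟨le_csInf (insert_nonempty _ _) fun s hs => (hL i hs).1, csInf_le (hL_bdd i) (mem_insert _ _)⟩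
  have hT_lt : ∀ i, ∀ x ∈ Icc a b, sInf (L i) < x → F a + i * δ ≤ F x := by
    intro i x hx hlt
    obtain ⟨r, hr, hrx⟩ := exists_lt_of_csInf_lt (insert_nonempty _ _) hlt
    rcases hr with rfl | ⟨hr, hFr⟩
    · exact absurd hx.2 (not_le.2 hrx)
    · exact hFr.trans (hF hr hx hrx.le)
  have hgt_T : ∀ i, ∀ y ∈ Icc a b, y < sInf (L i) → F y < F a + i * δ := fun i y hy hlt =>
    not_le.1 fun hFy => (csInf_le (hL_bdd i) (mem_insert_of_mem _ ⟨hy, hFy⟩)).not_gt hlt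
  refine ⟨k, fun i => sInf (L i), ?_, ?_, hT, ?_⟩
  · exact le_antisymm (csInf_le (hL_bdd 0) (mem_insert_of_mem _ ⟨⟨le_rfl, hab⟩, by simp⟩))
      (hT 0).1
  · refine le_antisymm (hT k).2 (le_csInf (insert_nonempty _ _) ?_)
    rintro s (rfl | ⟨hs, hFs⟩)
    · exact le_rfl
    · linarith [hF hs ⟨hab, le_rfl⟩ hs.2]
  · intro i x hx y hy
    have hIoo : Ioo (sInf (L i)) (sInf (L (i + 1))) ⊆ Icc a b := fun z hz =>
      ⟨(hT i).1.trans hz.1.le, hz.2.le.trans (hT (i + 1)).2⟩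
    have hFx := hT_lt i x (hIoo hx) hx.1
    have hFy := hgt_T (i + 1) y (hIoo hy) hy.2
    push_cast at hFy
    linarith

theorem antitone_div_add_two {c : ℝ} (hc : 0 ≤ c) : Antitone fun n : ℕ => c / ((n : ℝ) + 2) :=
  fun _ _ hmn => div_le_div_of_nonneg_left hc (by positivity) (by gcongr)

theorem div_add_two_mem_Ioo {c : ℝ} (hc : 0 < c) (n : ℕ) : c / ((n : ℝ) + 2) ∈ Ioo 0 c :=
  ⟨by positivity, div_lt_self hc (by linarith [n.cast_nonneg (α := ℝ)])⟩

theorem tendsto_div_add_two (c : ℝ) : Tendsto (fun n : ℕ => c / ((n : ℝ) + 2)) atTop (𝓝 0) :=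
  tendsto_const_nhds.div_atTop (tendsto_atTop_add_const_right _ 2 tendsto_natCast_atTop_atTop)

/-- For monotone `f` these are the one-sided limits `f (s+)` and `f (s'-)`. -/
noncomputable def intervalBracket (s s' : ℝ) : ((ℝ → ℝ) → ℝ) × ((ℝ → ℝ) → ℝ) :=
  (fun f => ⨅ n : ℕ, f (s + (s' - s) / (n + 2)), fun f => ⨆ n : ℕ, f (s' - (s' - s) / (n + 2)))

section IntervalBracket

variable {s s' : ℝ}

theorem measurable_intervalBracket_fst : Measurable (intervalBracket s s').1 :=
  Measurable.iInf fun _ => measurable_pi_apply _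

theorem measurable_intervalBracket_snd : Measurable (intervalBracket s s').2 :=
  Measurable.iSup fun _ => measurable_pi_apply _

variable (hss' : s < s')
include hss'

theorem intervalBracket_fst_mem_Ioo (n : ℕ) : s + (s' - s) / (n + 2) ∈ Ioo s s' := by
  have := div_add_two_mem_Ioo (sub_pos.2 hss') n
  exact ⟨by linarith [this.1], by linarith [this.2]⟩

theorem intervalBracket_snd_mem_Ioo (n : ℕ) : s' - (s' - s) / (n + 2) ∈ Ioo s s' := by
  have := div_add_two_mem_Ioo (sub_pos.2 hss') n
  exact ⟨by linarith [this.2], by linarith [this.1]⟩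

variable {f : ℝ → ℝ} (hf : Monotone f)
include hf

theorem bddBelow_intervalBracket_fst : BddBelow (range fun n : ℕ => f (s + (s' - s) / (n + 2))) :=
  ⟨f s, forall_mem_range.2 fun n => hf (intervalBracket_fst_mem_Ioo hss' n).1.le⟩

theorem bddAbove_intervalBracket_snd : BddAbove (range fun n : ℕ => f (s' - (s' - s) / (n + 2))) :=
  ⟨f s', forall_mem_range.2 fun n => hf (intervalBracket_snd_mem_Ioo hss' n).2.le⟩

theorem intervalBracket_fst_le {t : ℝ} (ht : s < t) : (intervalBracket s s').1 f ≤ f t := by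
  obtain ⟨n, hn⟩ :=
    ((tendsto_div_add_two (s' - s)).eventually (gt_mem_nhds (sub_pos.2 ht))).exists
  exact (ciInf_le (bddBelow_intervalBracket_fst hss' hf) n).trans (hf (by linarith))

theorem le_intervalBracket_snd {t : ℝ} (ht : t < s') : f t ≤ (intervalBracket s s').2 f := by
  obtain ⟨n, hn⟩ :=
    ((tendsto_div_add_two (s' - s)).eventually (gt_mem_nhds (sub_pos.2 ht))).exists
  exact (hf (by linarith)).trans (le_ciSup (bddAbove_intervalBracket_snd hss' hf) n)

theorem le_intervalBracket_fst : f s ≤ (intervalBracket s s').1 f :=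
  le_ciInf fun n => hf (intervalBracket_fst_mem_Ioo hss' n).1.le

theorem intervalBracket_snd_le : (intervalBracket s s').2 f ≤ f s' :=
  ciSup_le fun n => hf (intervalBracket_snd_mem_Ioo hss' n).2.le

theorem antitone_intervalBracket_fst_seq : Antitone fun n : ℕ => f (s + (s' - s) / (n + 2)) :=
  hf.comp_antitone ((antitone_div_add_two (sub_pos.2 hss').le).const_add s)

theorem monotone_intervalBracket_snd_seq : Monotone fun n : ℕ => f (s' - (s' - s) / (n + 2)) :=
  hf.comp fun _ _ hmn => sub_le_sub_left (antitone_div_add_two (sub_pos.2 hss').le hmn) s'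

end IntervalBracket

section IntervalBracketIntegral

variable {Ω : Type*} [MeasurableSpace Ω] {μ : Measure Ω} {Y : Ω → ℝ → ℝ} {s s' : ℝ}
  (hss' : s < s') (hY : ∀ ω, Monotone (Y ω)) (hYm : AEMeasurable Y μ)
  (hint : ∀ x ∈ Icc s s', Integrable (fun ω => Y ω x) μ)
include hss' hY hYm hint

theorem integrable_intervalBracket_fst :
    Integrable (fun ω => (intervalBracket s s').1 (Y ω)) μ :=
  integrable_of_le_of_le
    (measurable_intervalBracket_fst.comp_aemeasurable hYm).aestronglyMeasurable
    (ae_of_all _ fun ω => le_intervalBracket_fst hss' (hY ω))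
    (ae_of_all _ fun ω => intervalBracket_fst_le hss' (hY ω) hss')
    (hint s (left_mem_Icc.2 hss'.le)) (hint s' (right_mem_Icc.2 hss'.le))

theorem integrable_intervalBracket_snd :
    Integrable (fun ω => (intervalBracket s s').2 (Y ω)) μ :=
  integrable_of_le_of_le
    (measurable_intervalBracket_snd.comp_aemeasurable hYm).aestronglyMeasurable
    (ae_of_all _ fun ω => le_intervalBracket_snd hss' (hY ω) hss')
    (ae_of_all _ fun ω => intervalBracket_snd_le hss' (hY ω))
    (hint s (left_mem_Icc.2 hss'.le)) (hint s' (right_mem_Icc.2 hss'.le))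

theorem le_integral_intervalBracket_fst {c : ℝ} (hc : ∀ x ∈ Ioo s s', c ≤ ∫ ω, Y ω x ∂μ) :
    c ≤ ∫ ω, (intervalBracket s s').1 (Y ω) ∂μ :=
  ge_of_tendsto
    (integral_tendsto_of_tendsto_of_antitone
      (fun n => hint _ (Ioo_subset_Icc_self (intervalBracket_fst_mem_Ioo hss' n)))
      (integrable_intervalBracket_fst hss' hY hYm hint)
      (ae_of_all _ fun ω => antitone_intervalBracket_fst_seq hss' (hY ω))
      (ae_of_all _ fun ω => tendsto_atTop_ciInf (antitone_intervalBracket_fst_seq hss' (hY ω))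
        (bddBelow_intervalBracket_fst hss' (hY ω))))
    (Eventually.of_forall fun n => hc _ (intervalBracket_fst_mem_Ioo hss' n))

theorem integral_intervalBracket_snd_le {c : ℝ} (hc : ∀ x ∈ Ioo s s', ∫ ω, Y ω x ∂μ ≤ c) :
    ∫ ω, (intervalBracket s s').2 (Y ω) ∂μ ≤ c :=
  le_of_tendsto
    (integral_tendsto_of_tendsto_of_monotone
      (fun n => hint _ (Ioo_subset_Icc_self (intervalBracket_snd_mem_Ioo hss' n)))
      (integrable_intervalBracket_snd hss' hY hYm hint)
      (ae_of_all _ fun ω => monotone_intervalBracket_snd_seq hss' (hY ω))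
      (ae_of_all _ fun ω => tendsto_atTop_ciSup (monotone_intervalBracket_snd_seq hss' (hY ω))
        (bddAbove_intervalBracket_snd hss' (hY ω))))
    (Eventually.of_forall fun n => hc _ (intervalBracket_snd_mem_Ioo hss' n))

theorem isBracket_intervalBracket {δ : ℝ}
    (hgap : ∀ x ∈ Ioo s s', ∀ y ∈ Ioo s s', ∫ ω, Y ω y ∂μ ≤ ∫ ω, Y ω x ∂μ + δ)
    {t : ℝ} (ht : t ∈ Ioo s s') :
    IsBracket μ Y {f | Monotone f} δ (fun f => f t) (intervalBracket s s') where
  measurable_fst := measurable_intervalBracket_fst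
  measurable_snd := measurable_intervalBracket_snd
  integrable_fst := integrable_intervalBracket_fst hss' hY hYm hint
  integrable_snd := integrable_intervalBracket_snd hss' hY hYm hint
  fst_le _ hf := intervalBracket_fst_le hss' hf ht.1
  le_snd _ hf := le_intervalBracket_snd hss' hf ht.2
  integral_snd_sub_integral_fst_le := sub_le_comm.1 <|
    le_integral_intervalBracket_fst hss' hY hYm hint fun x hx => sub_le_iff_le_add.2 <|
      integral_intervalBracket_snd_le hss' hY hYm hint fun y hy => hgap x hx y hy

end IntervalBracketIntegral

theorem exists_finite_isBracket_of_monotone {Ω : Type*} [MeasurableSpace Ω] {μ : Measure Ω}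
    {Y : Ω → ℝ → ℝ} {a b δ : ℝ} (hY : ∀ ω, Monotone (Y ω))
    (hYm : AEMeasurable Y μ) (hab : a ≤ b) (hint : ∀ t ∈ Icc a b, Integrable (fun ω => Y ω t) μ)
    (hδ : 0 < δ) :
    ∃ B : Set (((ℝ → ℝ) → ℝ) × ((ℝ → ℝ) → ℝ)), B.Finite ∧
      ∀ t ∈ Icc a b, ∃ p ∈ B, IsBracket μ Y {f | Monotone f} δ (fun f => f t) p := by
  have hF : MonotoneOn (fun t => ∫ ω, Y ω t ∂μ) (Icc a b) := fun x hx y hy hxy =>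
    integral_mono (hint x hx) (hint y hy) fun ω => hY ω hxy
  obtain ⟨k, T, hT0, hTk, hT, hgap⟩ := exists_partition_oscillation_le hab hF hδ
  have hpoint : ∀ i, IsBracket μ Y {f | Monotone f} δ (fun f => f (T i))
      ((fun f => f (T i)), (fun f => f (T i))) := fun i =>
    isBracket_self (measurable_pi_apply _) (hint _ (hT i)) hδ.le
  refine ⟨(fun i => ((fun f => f (T i)), (fun f => f (T i)))) '' Iic k ∪
      (fun i => intervalBracket (T i) (T (i + 1))) '' Iio k,
    ((finite_Iic k).image _).union ((finite_Iio k).image _), fun t ht => ?_⟩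
  rcases ht.2.eq_or_lt with rfl | htb
  · rw [← hTk]
    exact ⟨_, Or.inl (mem_image_of_mem _ (mem_Iic.2 le_rfl)), hpoint k⟩
  obtain ⟨i, hik, hTi, htT⟩ := mem_iUnion₂.1 (Ico_subset_biUnion_Ico k T ⟨hT0 ▸ ht.1, hTk ▸ htb⟩)
  replace hik := Finset.mem_range.1 hik
  rcases hTi.eq_or_lt with rfl | hTit
  · exact ⟨_, Or.inl (mem_image_of_mem _ (mem_Iic.2 hik.le)), hpoint i⟩
  refine ⟨_, Or.inr (mem_image_of_mem _ (mem_Iio.2 hik)), ?_⟩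
  exact isBracket_intervalBracket (hTit.trans htT) hY hYm
    (fun x hx => hint x ⟨(hT i).1.trans hx.1, hx.2.trans (hT (i + 1)).2⟩) (hgap i) ⟨hTit, htT⟩

theorem glivenko_cantelli_monotone_general
    {Ω : Type*} [MeasurableSpace Ω] (μ : Measure Ω)
    (a b : ℝ) (hab : a ≤ b)
    (X : ℕ → Ω → (ℝ → ℝ))
    (hX_indep : iIndepFun X μ)
    (hX_ident : ∀ n, IdentDistrib (X n) (X 0) μ μ)
    (hX_nonneg : ∀ n, ∀ ω, ∀ t : ℝ, 0 ≤ X n ω t)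
    (hX_mono : ∀ n, ∀ ω, Monotone (X n ω))
    (hX_int : Integrable (fun ω => X 0 ω b) μ)
    (F : ℝ → ℝ) (hF : ∀ t : ℝ, F t = ∫ ω, X 0 ω t ∂μ) :
    ∀ᵐ ω ∂μ,
      Tendsto (fun n : ℕ => ⨆ t : Set.Icc a b,
        |(n : ℝ)⁻¹ * ∑ m ∈ Finset.range n, X m ω t - F t|) atTop (𝓝 0) := by
  have : Nonempty (Icc a b) := (nonempty_Icc.2 hab).to_subtype
  have hXm : AEMeasurable (X 0) μ := (hX_ident 0).aemeasurable_fst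
  have hint : ∀ t ∈ Icc a b, Integrable (fun ω => X 0 ω t) μ := fun t ht =>
    hX_int.mono' ((measurable_pi_apply t).comp_aemeasurable hXm).aestronglyMeasurable
      (ae_of_all _ fun ω => (Real.norm_of_nonneg (hX_nonneg 0 ω t)).trans_le (hX_mono 0 ω ht.2))
  refine ae_tendsto_iSup_abs_of_forall_pos fun ε hε => ?_
  obtain ⟨B, hB, hcover⟩ :=
    exists_finite_isBracket_of_monotone (hX_mono 0) hXm hab hint (half_pos hε)
  have := ae_eventually_forall_abs_average_sub_integral_le_of_isBracket (S := {f | Monotone f})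
    (hX_mono · ·) hX_indep hX_ident (h := fun (t : Icc a b) f => f t) (fun t => hint t t.2)
    (half_pos hε) hB fun t => hcover t t.2
  simpa only [← hF, mul_div_cancel₀ ε two_ne_zero] using this

/-- Almost-sure uniform law of large numbers for i.i.d. monotone random functions
(Glivenko–Cantelli theorem for monotone processes, not assuming continuity of the limit):
if the paths are nonnegative and nondecreasing and the value at the right endpoint is
integrable, then the empirical means converge uniformly on `[a,b]` to the mean function,
almost surely. -/
theorem glivenko_cantelli_monotone
    {Ω : Type*} [MeasurableSpace Ω] (μ : Measure Ω) [IsProbabilityMeasure μ]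
    (a b : ℝ) (hab : a ≤ b)
    (X : ℕ → Ω → (ℝ → ℝ))
    (hX_meas : ∀ n, Measurable (X n))
    (hX_indep : iIndepFun X μ)
    (hX_ident : ∀ n, IdentDistrib (X n) (X 0) μ μ)
    (hX_nonneg : ∀ n, ∀ ω, ∀ t : ℝ, 0 ≤ X n ω t)
    (hX_mono : ∀ n, ∀ ω, Monotone (X n ω))
    (hX_int : Integrable (fun ω => X 0 ω b) μ)
    (F : ℝ → ℝ) (hF : ∀ t : ℝ, F t = ∫ ω, X 0 ω t ∂μ) :
    ∀ᵐ ω ∂μ,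
      Tendsto (fun n : ℕ => ⨆ t : Set.Icc a b,
        |(n : ℝ)⁻¹ * ∑ m ∈ Finset.range n, X m ω t - F t|) atTop (𝓝 0) :=
  glivenko_cantelli_monotone_general μ a b hab X hX_indep hX_ident hX_nonneg hX_mono hX_int F hF
end
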